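/- Let G be a finite graph with no twins and no universal vertices. Then G is a circular-arc graph if and only if the overlap graph G_ov admits a conformal oriented chord model. -/

import Mathlib

namespace CAIso

/-- The circle on which all models live. -/
abbrev Circle1 : Type := UnitAddCircle

variable {V : Type*}

/-- Closed neighborhood of a vertex. -/
def cnbr (G : SimpleGraph V) (v : V) : Set V := insert v {u | G.Adj v u}

/-- `G` has no twins: distinct vertices have distinct closed neighborhoods. -/
def NoTwins (G : SimpleGraph V) : Prop := ∀ u v : V, u ≠ v → cnbr G u ≠ cnbr G v

/-- `G` has no universal vertices. -/
def NoUniversal (G : SimpleGraph V) : Prop := ∀ v : V, cnbr G v ≠ Set.univ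

/-- `v di u` : non-adjacent (distinct) vertices. -/
def Di (G : SimpleGraph V) (v u : V) : Prop := v ≠ u ∧ ¬ G.Adj v u
/-- `v cs u` : `N[u] ⊊ N[v]`. -/
def Cs (G : SimpleGraph V) (v u : V) : Prop := v ≠ u ∧ cnbr G u ⊂ cnbr G v
/-- `v cd u` : `N[v] ⊊ N[u]`. -/
def Cd (G : SimpleGraph V) (v u : V) : Prop := v ≠ u ∧ cnbr G v ⊂ cnbr G u
/-- `v cc u`. -/
def Cc (G : SimpleGraph V) (v u : V) : Prop :=
  v ≠ u ∧ G.Adj v u ∧ cnbr G v ∪ cnbr G u = Set.univ ∧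
  (∀ w ∈ cnbr G v \ cnbr G u, cnbr G w ⊂ cnbr G v) ∧
  (∀ w ∈ cnbr G u \ cnbr G v, cnbr G w ⊂ cnbr G u)
/-- `v ov u` : the overlap relation `∼` of the overlap graph `G_ov`. -/
def Ov (G : SimpleGraph V) (v u : V) : Prop :=
  v ≠ u ∧ ¬ Di G v u ∧ ¬ Cs G v u ∧ ¬ Cd G v u ∧ ¬ Cc G v u
/-- `v ∥ u` : distinct and not `∼`-adjacent (complement of the overlap graph). -/
def ParR (G : SimpleGraph V) (v u : V) : Prop := v ≠ u ∧ ¬ Ov G v u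

/-- `left(v)`. -/
def leftSet (G : SimpleGraph V) (v : V) : Set V := {u | Cs G v u ∨ Cc G v u}
/-- `right(v)`. -/
def rightSet (G : SimpleGraph V) (v : V) : Set V := {u | Di G v u ∨ Cd G v u}

/-- The labeled endpoint map of a model: `(v, false)` is the first endpoint
(tail of a chord / initial endpoint of an arc, the letter `v⁰`), `(v, true)` the second
(the letter `v¹`). -/
def lep (φ : V → Circle1 × Circle1) (p : V × Bool) : Circle1 :=
  if p.2 then (φ p.1).2 else (φ p.1).1

/-- All endpoints of the objects assigned to vertices of `M` are pairwise distinct. -/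
def DistinctEndpointsOn (M : Set V) (φ : V → Circle1 × Circle1) : Prop :=
  Set.InjOn (lep φ) {p : V × Bool | p.1 ∈ M}

/-- The closed arc running in the positive direction from `c.1` to `c.2`. -/
def arcPts (c : Circle1 × Circle1) : Set Circle1 := {x | btw c.1 x c.2}
/-- The closed arc from `a` to `b` (positive direction). -/
def arcSet (a b : Circle1) : Set Circle1 := {x | btw a x b}
/-- The open arc from `a` to `b` (positive direction). -/
def oarcSet (a b : Circle1) : Set Circle1 := {x | sbtw a x b}

/-- A circular-arc model of `G`. -/
def IsCAModel (G : SimpleGraph V) (ψ : V → Circle1 × Circle1) : Prop :=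
  DistinctEndpointsOn Set.univ ψ ∧
  ∀ u v : V, u ≠ v → (G.Adj u v ↔ (arcPts (ψ u) ∩ arcPts (ψ v)).Nonempty)

/-- `G` is a circular-arc graph. -/
def IsCircularArc (G : SimpleGraph V) : Prop := ∃ ψ, IsCAModel G ψ

/-- Two arcs overlap: they intersect, neither contains the other,
and their union is not the whole circle. -/
def ArcsOverlap (c d : Circle1 × Circle1) : Prop :=
  (arcPts c ∩ arcPts d).Nonempty ∧ ¬ arcPts c ⊆ arcPts d ∧ ¬ arcPts d ⊆ arcPts c ∧
  arcPts c ∪ arcPts d ≠ Set.univ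

/-- A normalized circular-arc model of `G`. -/
def IsNormalizedModel (G : SimpleGraph V) (ψ : V → Circle1 × Circle1) : Prop :=
  IsCAModel G ψ ∧ ∀ u v : V, u ≠ v →
    ((Di G v u ↔ arcPts (ψ v) ∩ arcPts (ψ u) = ∅) ∧
     (Cs G v u ↔ arcPts (ψ u) ⊂ arcPts (ψ v)) ∧
     (Cd G v u ↔ arcPts (ψ v) ⊂ arcPts (ψ u)) ∧
     (Cc G v u ↔ arcPts (ψ v) ∪ arcPts (ψ u) = Set.univ) ∧
     (Ov G v u ↔ ArcsOverlap (ψ v) (ψ u)))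

/-- Two chords cross: each open arc determined by `c` contains exactly one endpoint of `d`. -/
def Crosses (c d : Circle1 × Circle1) : Prop :=
  (sbtw c.1 d.1 c.2 ∧ sbtw c.2 d.2 c.1) ∨ (sbtw c.1 d.2 c.2 ∧ sbtw c.2 d.1 c.1)

/-- A chord model of the relation `r` on the vertex set `M`. -/
def IsChordModelOn (r : V → V → Prop) (M : Set V) (φ : V → Circle1 × Circle1) : Prop :=
  DistinctEndpointsOn M φ ∧ ∀ u ∈ M, ∀ v ∈ M, u ≠ v → (r u v ↔ Crosses (φ u) (φ v))

/-- Chord `d` lies on the left side of the oriented chord `c = (tail, head)`: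
both endpoints of `d` lie in the open arc from the tail of `c` to the head of `c`. -/
def OnLeft (c d : Circle1 × Circle1) : Prop := sbtw c.1 d.1 c.2 ∧ sbtw c.1 d.2 c.2
/-- Chord `d` lies on the right side of the oriented chord `c`. -/
def OnRight (c d : Circle1 × Circle1) : Prop := sbtw c.2 d.1 c.1 ∧ sbtw c.2 d.2 c.1

/-- A conformal (oriented chord) model of `(M, ∼)`, where `∼` is the overlap relation of `G`. -/
def IsConformalOn (G : SimpleGraph V) (M : Set V) (φ : V → Circle1 × Circle1) : Prop :=
  IsChordModelOn (Ov G) M φ ∧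
  ∀ v ∈ M, ∀ u ∈ M, u ≠ v →
    ((u ∈ leftSet G v ↔ OnLeft (φ v) (φ u)) ∧ (u ∈ rightSet G v ↔ OnRight (φ v) (φ u)))

/-- `x ∼ M` : `x` is `∼`-adjacent to every vertex of `M`. -/
def SimAll (G : SimpleGraph V) (x : V) (M : Set V) : Prop := ∀ m ∈ M, Ov G x m
/-- `x ∥ M`. -/
def ParAll (G : SimpleGraph V) (x : V) (M : Set V) : Prop := ∀ m ∈ M, ParR G x m

/-- A module of the overlap graph `G_ov`. -/
def IsModule (G : SimpleGraph V) (M : Set V) : Prop :=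
  M.Nonempty ∧ ∀ x ∉ M, SimAll G x M ∨ ParAll G x M

/-- A strong module of `G_ov`. -/
def IsStrongModule (G : SimpleGraph V) (M : Set V) : Prop :=
  IsModule G M ∧ ∀ N, IsModule G N → N ⊆ M ∨ M ⊆ N ∨ Disjoint M N

/-- A proper module: some outside vertex is `∼`-adjacent to all of `M`. -/
def ProperModule (G : SimpleGraph V) (M : Set V) : Prop := ∃ x ∉ M, SimAll G x M

/-- `N` is a child of `M` in the modular decomposition:
a maximal strong module properly contained in `M`. -/
def IsChildOf (G : SimpleGraph V) (M N : Set V) : Prop :=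
  IsStrongModule G N ∧ N ⊂ M ∧ ∀ N', IsStrongModule G N' → N' ⊂ M → N ⊆ N' → N' = N

def NonSingleton (M : Set V) : Prop := ∃ x ∈ M, ∃ y ∈ M, x ≠ y

def ChildrenPairwiseSim (G : SimpleGraph V) (M : Set V) : Prop :=
  ∀ N₁ N₂, IsChildOf G M N₁ → IsChildOf G M N₂ → N₁ ≠ N₂ → ∀ x ∈ N₁, ∀ y ∈ N₂, Ov G x y
def ChildrenPairwisePar (G : SimpleGraph V) (M : Set V) : Prop :=
  ∀ N₁ N₂, IsChildOf G M N₁ → IsChildOf G M N₂ → N₁ ≠ N₂ → ∀ x ∈ N₁, ∀ y ∈ N₂, ParR G x y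

/-- A serial strong module of the modular decomposition of `G_ov`. -/
def SerialM (G : SimpleGraph V) (M : Set V) : Prop :=
  IsStrongModule G M ∧ NonSingleton M ∧ ChildrenPairwiseSim G M
/-- A parallel strong module. -/
def ParallelM (G : SimpleGraph V) (M : Set V) : Prop :=
  IsStrongModule G M ∧ NonSingleton M ∧ ChildrenPairwisePar G M
/-- A prime strong module (neither serial nor parallel). -/
def PrimeM (G : SimpleGraph V) (M : Set V) : Prop :=
  IsStrongModule G M ∧ NonSingleton M ∧ ¬ ChildrenPairwiseSim G M ∧ ¬ ChildrenPairwisePar G M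

/-- The graph induced by the (symmetrized) relation `r` on the set `M` is connected. -/
def ConnOn (r : V → V → Prop) (M : Set V) : Prop :=
  M.Nonempty ∧ ∀ ⦃x⦄, x ∈ M → ∀ ⦃y⦄, y ∈ M →
    Relation.ReflTransGen (fun a b => a ∈ M ∧ b ∈ M ∧ (r a b ∨ r b a)) x y

/-- `N[M]`, the set of outside vertices `∼`-adjacent to all of `M`. -/
def nbrMod (G : SimpleGraph V) (M : Set V) : Set V := {x | x ∉ M ∧ SimAll G x M}

/-- `C[M]`, the vertex set of the connected component of `G_ov` containing `M`. -/
def compOf (G : SimpleGraph V) (M : Set V) : Set V :=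
  {x | ∃ m ∈ M, Relation.ReflTransGen (fun a b => Ov G a b ∨ Ov G b a) x m}

/-- The set of endpoints of the chords/arcs of the vertices in `A`. -/
def eptSet (φ : V → Circle1 × Circle1) (A : Set V) : Set Circle1 :=
  {x | ∃ p : V × Bool, p.1 ∈ A ∧ lep φ p = x}

/-- The set of circle points realizing a set of labeled letters. -/
def lepIm (φ : V → Circle1 × Circle1) (P : Set (V × Bool)) : Set Circle1 :=
  {x | ∃ p ∈ P, lep φ p = x}

/-- `X` is contiguous in `Y`: `X = Y ∩ A` for a circular arc `A`. -/
def ContiguousIn (X Y : Set Circle1) : Prop := ∃ a b : Circle1, a ≠ b ∧ X = Y ∩ arcSet a b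

/-- `X` forms two contiguous blocks in `Y`. -/
def TwoBlocks (Y X : Set Circle1) : Prop :=
  ∃ X₁ X₂ : Set Circle1, X₁.Nonempty ∧ X₂.Nonempty ∧ Disjoint X₁ X₂ ∧ X₁ ∪ X₂ = X ∧
    ContiguousIn X₁ Y ∧ ContiguousIn X₂ Y

/-- The endpoints of `M` form two contiguous blocks, given by the arcs `(a,b)` and `(a',b')`,
within the endpoints of `Y`, each block containing exactly one endpoint of each chord of `M`. -/
def BlockDecomp (φ : V → Circle1 × Circle1) (Y M : Set V) (a b a' b' : Circle1) : Prop :=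
  a ≠ b ∧ a' ≠ b' ∧
  a ∉ eptSet φ Y ∧ b ∉ eptSet φ Y ∧ a' ∉ eptSet φ Y ∧ b' ∉ eptSet φ Y ∧
  Disjoint (eptSet φ Y ∩ arcSet a b) (eptSet φ Y ∩ arcSet a' b') ∧
  (eptSet φ Y ∩ arcSet a b) ∪ (eptSet φ Y ∩ arcSet a' b') = eptSet φ M ∧
  ∀ v ∈ M, (lep φ (v, false) ∈ arcSet a b ∧ lep φ (v, true) ∈ arcSet a' b') ∨
           (lep φ (v, false) ∈ arcSet a' b' ∧ lep φ (v, true) ∈ arcSet a b)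

/-- Reading order along the arc `(a,b)`: some endpoint of `u` inside the arc
precedes some endpoint of `w` inside the arc. -/
def rdOrd (φ : V → Circle1 × Circle1) (a b : Circle1) (u w : V) : Prop :=
  ∃ p q : Bool, lep φ (u, p) ∈ arcSet a b ∧ lep φ (w, q) ∈ arcSet a b ∧
    lep φ (u, p) ≠ lep φ (w, q) ∧ btw a (lep φ (u, p)) (lep φ (w, q))

/-- The letter of `u` belonging to `P` precedes the letter of `w` belonging to `P`,
reading from the point `a` in the positive direction. -/
def precInSet (φ : V → Circle1 × Circle1) (P : Set (V × Bool)) (a : Circle1) (u w : V) : Prop :=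
  ∃ p q : Bool, (u, p) ∈ P ∧ (w, q) ∈ P ∧ lep φ (u, p) ≠ lep φ (w, q) ∧
    btw a (lep φ (u, p)) (lep φ (w, q))

/-- `r` is a strict linear order on the set `M`. -/
def IsLinOrderOn (M : Set V) (r : V → V → Prop) : Prop :=
  (∀ x ∈ M, ¬ r x x) ∧
  (∀ x ∈ M, ∀ y ∈ M, ∀ z ∈ M, r x y → r y z → r x z) ∧
  (∀ x ∈ M, ∀ y ∈ M, x ≠ y → (r x y ↔ ¬ r y x))

/-- `(r₁, r₂)` is a permutation model of the graph `(M, adj)`. -/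
def IsPermModelOn (adj : V → V → Prop) (M : Set V) (r₁ r₂ : V → V → Prop) : Prop :=
  IsLinOrderOn M r₁ ∧ IsLinOrderOn M r₂ ∧
  ∀ x ∈ M, ∀ y ∈ M, x ≠ y → (adj x y ↔ (r₁ x y ↔ r₂ x y))

/-- `r` is an orientation of the edges `E` restricted to `M`. -/
def IsOrientationOn (E : V → V → Prop) (M : Set V) (r : V → V → Prop) : Prop :=
  (∀ x y, r x y → x ∈ M ∧ y ∈ M ∧ E x y) ∧
  (∀ x ∈ M, ∀ y ∈ M, E x y → (r x y ↔ ¬ r y x))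

/-- `r` is a transitive orientation of the edges `E` restricted to `M`. -/
def IsTransOrientOn (E : V → V → Prop) (M : Set V) (r : V → V → Prop) : Prop :=
  IsOrientationOn E M r ∧ ∀ x y z, r x y → r y z → r x z

/-- The cyclic betweenness of three labeled endpoints of a model. -/
def sb3 (φ : V → Circle1 × Circle1) (p q r : V × Bool) : Prop :=
  sbtw (lep φ p) (lep φ q) (lep φ r)

/-- Equivalence of oriented chord models restricted to `M` (equal circular words
over the labeled letters). -/
def OEquivOn (M : Set V) (φ ψ : V → Circle1 × Circle1) : Prop :=
  ∀ p q r : V × Bool, p.1 ∈ M → q.1 ∈ M → r.1 ∈ M → (sb3 φ p q r ↔ sb3 ψ p q r)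

def flipB : V × Bool → V × Bool := fun p => (p.1, !p.2)

/-- `ψ` is (equivalent to) the reflection of `φ` on `M`: the circular word of `ψ`
is the reverse of that of `φ` with `v⁰` and `v¹` exchanged. -/
def OReflOn (M : Set V) (φ ψ : V → Circle1 × Circle1) : Prop :=
  ∀ p q r : V × Bool, p.1 ∈ M → q.1 ∈ M → r.1 ∈ M →
    (sb3 φ p q r ↔ sb3 ψ (flipB r) (flipB q) (flipB p))

def swapBy (h : V → Bool) : V × Bool → V × Bool := fun p => (p.1, xor p.2 (h p.1))

/-- Equivalence of (non-oriented) chord models: equal circular word representations. -/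
def UEquiv (φ ψ : V → Circle1 × Circle1) : Prop :=
  ∃ h : V → Bool, ∀ p q r : V × Bool,
    sb3 φ p q r ↔ sb3 ψ (swapBy h p) (swapBy h q) (swapBy h r)

/-- `ψ` is equivalent to the reflection of the (non-oriented) chord model `φ`. -/
def UReflEquiv (φ ψ : V → Circle1 × Circle1) : Prop :=
  ∃ h : V → Bool, ∀ p q r : V × Bool,
    sb3 φ p q r ↔ sb3 ψ (swapBy h r) (swapBy h q) (swapBy h p)

/-- The sets `S 0, …, S (n-1)` appear in this circular order around the circle:
there are cut points, in cyclic order, such that `S i` lies in the `i`-th gap. -/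
def SetsInCyclicOrder (n : ℕ) (S : ℕ → Set Circle1) : Prop :=
  ∃ r : ℕ → ℝ,
    (∀ i j, i < j → j < n → r i < r j) ∧
    (∀ i, i < n → ∀ j, j < n → r i < r j + 1) ∧
    ∀ i, i < n → ∀ x ∈ S i, sbtw ((r i : ℝ) : Circle1) x ((r ((i + 1) % n) : ℝ) : Circle1)

/-- A split `(A, α(A), B, α(B))` of the graph `G`. -/
def IsSplit (G : SimpleGraph V) (A aA B aB : Set V) : Prop :=
  A.Nonempty ∧ B.Nonempty ∧
  Disjoint A aA ∧ Disjoint A B ∧ Disjoint A aB ∧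
  Disjoint aA B ∧ Disjoint aA aB ∧ Disjoint B aB ∧
  A ∪ aA ∪ B ∪ aB = Set.univ ∧
  (∀ a ∈ A, ∀ b ∈ B, G.Adj a b) ∧
  (∀ x ∈ aA, ∀ y ∈ B ∪ aB, ¬ G.Adj x y) ∧
  (∀ x ∈ aB, ∀ y ∈ A ∪ aA, ¬ G.Adj x y)

/-- A non-trivial split. -/
def NontrivialSplit (G : SimpleGraph V) (A aA B aB : Set V) : Prop :=
  IsSplit G A aA B aB ∧ 1 < (A ∪ aA).ncard ∧ 1 < (B ∪ aB).ncard

/-- The metaedge `(M⁰, M¹, <_M)` of the module `M` with representant `rep`: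
`M⁰, M¹` partition the labeled letters of `M` (one letter of each vertex on each side,
with `rep⁰ ∈ M⁰`), `<_M` is a transitive orientation of `(M, ∥)`, and in every conformal
model of `G_ov`, for every decomposition of the letters of `M` into two contiguous blocks
among the letters of `C[M]` whose first block contains `rep⁰`, the first block consists
exactly of the letters `M⁰`, the second of `M¹`, and the reading order of the first block
restricted to `∥`-pairs is exactly `<_M`. -/
def IsMetaedge (G : SimpleGraph V) (M : Set V) (rep : V)
    (M0 M1 : Set (V × Bool)) (lt : V → V → Prop) : Prop :=
  M0 ∪ M1 = {p : V × Bool | p.1 ∈ M} ∧ Disjoint M0 M1 ∧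
  (∀ v ∈ M, ((v, false) ∈ M0 ↔ (v, true) ∈ M1)) ∧
  (rep, false) ∈ M0 ∧
  IsTransOrientOn (ParR G) M lt ∧
  ∀ φ : V → Circle1 × Circle1, IsConformalOn G Set.univ φ →
    ∀ a b a' b' : Circle1, BlockDecomp φ (compOf G M) M a b a' b' →
      lep φ (rep, false) ∈ arcSet a b →
      ((∀ p : V × Bool, p.1 ∈ M →
          ((p ∈ M0 ↔ lep φ p ∈ arcSet a b) ∧ (p ∈ M1 ↔ lep φ p ∈ arcSet a' b'))) ∧
       ∀ x ∈ M, ∀ y ∈ M, ParR G x y → (lt x y ↔ precInSet φ M0 a x y))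

/-- In the model `φ`, the letters `W0` are placed in the open arc `(c0, d0)`, the letters
`W1` in the open arc `(c1, d1)`, and the two induced reading orders form an (admissible)
oriented permutation model of `(Wset, ∼)` whose first order agrees with `lt` on `∥`-pairs. -/
def AdmissiblePlacedAt (G : SimpleGraph V) (φ : V → Circle1 × Circle1)
    (Wset : Set V) (W0 W1 : Set (V × Bool)) (lt : V → V → Prop)
    (c0 d0 c1 d1 : Circle1) : Prop :=
  (∀ p ∈ W0, sbtw c0 (lep φ p) d0) ∧
  (∀ p ∈ W1, sbtw c1 (lep φ p) d1) ∧
  (∀ x ∈ Wset, ∀ y ∈ Wset, x ≠ y →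
    (Ov G x y ↔ (precInSet φ W0 c0 x y ↔ precInSet φ W1 c1 x y))) ∧
  (∀ x ∈ Wset, ∀ y ∈ Wset, ParR G x y → (lt x y ↔ precInSet φ W0 c0 x y))

/-- An improper prime strong module: `(M,∼)` and `(M,∥)` are connected
and no outside vertex is `∼`-adjacent to all of `M`. -/
def ImproperPrime (G : SimpleGraph V) (M : Set V) : Prop :=
  IsStrongModule G M ∧ ConnOn (Ov G) M ∧ ConnOn (ParR G) M ∧ ¬ ProperModule G M

/-- `U` is a transversal of `M`: it contains exactly one vertex of each child of `M`. -/
def IsTransversal (G : SimpleGraph V) (M U : Set V) : Prop :=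
  U ⊆ M ∧ (∀ N, IsChildOf G M N → ∃! u, u ∈ U ∩ N) ∧
  ∀ u ∈ U, ∃ N, IsChildOf G M N ∧ u ∈ N

/-- A probe `(y, x, X, α(X))` in the graph `(Uset, ∼)`. -/
def IsProbe (G : SimpleGraph V) (Uset : Set V) (y x : V) (X aX : Set V) : Prop :=
  x ≠ y ∧ X.Nonempty ∧ aX.Nonempty ∧
  Disjoint ({x, y} : Set V) X ∧ Disjoint ({x, y} : Set V) aX ∧ Disjoint X aX ∧
  ({x, y} ∪ X ∪ aX) ⊂ Uset ∧
  Ov G y x ∧ (∀ z ∈ X ∪ aX, ParR G y z) ∧ (∀ z ∈ X, Ov G x z) ∧ (∀ z ∈ aX, ParR G x z) ∧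
  ConnOn (Ov G) ({x, y} ∪ X ∪ aX) ∧
  ∀ z ∈ Uset \ ({x, y} ∪ X ∪ aX),
    (∀ w ∈ X ∪ aX, ParR G z w) ∨ ((∀ w ∈ X, Ov G z w) ∧ ∀ w ∈ aX, ParR G z w) ∨
    (∀ w ∈ X ∪ aX, Ov G z w)

/-- The `K`-relation on a child `Mi` of an improper prime module, relative to the
transversal `U`; its equivalence classes are the consistent submodules. -/
def KrelOn (G : SimpleGraph V) (U Mi : Set V) (v v' : V) : Prop :=
  v ∈ Mi ∧ v' ∈ Mi ∧
  (v = v' ∨ PrimeM G Mi ∨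
   (ParallelM G Mi ∧ ∀ u ∈ U \ Mi,
      (v ∈ leftSet G u ∧ v' ∈ leftSet G u) ∨ (v ∈ rightSet G u ∧ v' ∈ rightSet G u)) ∨
   (SerialM G Mi ∧
      ({leftSet G v ∩ (U \ Mi), rightSet G v ∩ (U \ Mi)} : Set (Set V)) =
       {leftSet G v' ∩ (U \ Mi), rightSet G v' ∩ (U \ Mi)}))

/-- `M` is the vertex set of a connected component of `G_ov`. -/
def IsCompOf (G : SimpleGraph V) (M : Set V) : Prop :=
  ∃ v, M = {u | Relation.ReflTransGen (fun a b => Ov G a b ∨ Ov G b a) v u}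

/-- `v` separates the modules `M₁` and `M₂`. -/
def Separates (G : SimpleGraph V) (v : V) (M₁ M₂ : Set V) : Prop :=
  v ∉ M₁ ∪ M₂ ∧
  ((M₁ ⊆ leftSet G v ∧ M₂ ⊆ rightSet G v) ∨ (M₂ ⊆ leftSet G v ∧ M₁ ⊆ rightSet G v))

def NonSep (G : SimpleGraph V) (M₁ M₂ : Set V) : Prop := ¬ ∃ v, Separates G v M₁ M₂

/-- A node: a maximal set of pairwise non-separated components of `G_ov`. -/
def IsNode (G : SimpleGraph V) (N : Set (Set V)) : Prop :=
  (∀ M ∈ N, IsCompOf G M) ∧ (∀ M₁ ∈ N, ∀ M₂ ∈ N, NonSep G M₁ M₂) ∧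
  (∀ M', IsCompOf G M' → (∀ M ∈ N, NonSep G M' M) → M' ∈ N)

/-- The vertex set of the bipartite graph `T_NM` : modules (components of `G_ov`) on the
left, nodes on the right. -/
def TVert (G : SimpleGraph V) : Type _ :=
  {M : Set V // IsCompOf G M} ⊕ {N : Set (Set V) // IsNode G N}

/-- The bipartite graph `T_NM`. -/
def TNM (G : SimpleGraph V) : SimpleGraph (TVert G) where
  Adj x y :=
    match x, y with
    | Sum.inl M, Sum.inr N => M.1 ∈ N.1
    | Sum.inr N, Sum.inl M => M.1 ∈ N.1
    | _, _ => False
  symm := ⟨by rintro (M | N) (M' | N') h <;> exact h⟩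
  loopless := ⟨by rintro (M | N) h <;> exact h⟩

/-- The set of vertices of `G` contained in the modules lying in the connected component
of `T_NM − x₀` containing `y`. -/
def VTavoid (G : SimpleGraph V) (x₀ y : TVert G) : Set V :=
  {u | ∃ M : {M : Set V // IsCompOf G M},
    Relation.ReflTransGen (fun a c => (TNM G).Adj a c ∧ a ≠ x₀ ∧ c ≠ x₀) y (Sum.inl M) ∧
    u ∈ M.1}


/-!
Read as arcs (from tail to head in the positive direction), the chords of a conformal model form a
circular-arc model: adjacent vertices have chords that cross or lie on one another's left, so
their arcs meet, while the chords of non-adjacent vertices lie on each other's right, so their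
arcs are disjoint.

Conversely, a circular-arc model can be normalized so that `N[u] ⊆ N[v]` puts the arc of `u`
inside the arc of `v` and the arcs of every `cc` pair cover the circle. Then `di, cs, cd, cc, ov`
are exactly the relative positions "disjoint, containing, contained, covering, overlapping" of two
arcs, and the side of the chord `(a, b)` on which the chord `(p, q)` lies is decided by which of
`p, q` lie in the arc from `a` to `b`; so the arcs, read as chords, form a conformal model.
The first normalization replaces each arc by the union of the arcs of the vertices it dominates,
an arc because no vertex is universal; the second extends the arcs of a non-covering `cc` pair
into the gap between them, where they only meet arcs of common neighbours. Arcs only grow, so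
alternating the two normalizations terminates.
-/

section ArcLength

open QuotientAddGroup

/-- The length of the arc running in the positive direction from `a` to `b`. -/
noncomputable def arcLen (a b : Circle1) : ℝ :=
  (equivIcoMod (α := ℝ) (p := 1) one_pos 0 (b - a) : ℝ)

lemma arcLen_nonneg (a b : Circle1) : 0 ≤ arcLen a b :=
  (equivIcoMod (α := ℝ) (p := 1) one_pos 0 (b - a)).2.1

lemma arcLen_lt_one (a b : Circle1) : arcLen a b < 1 :=
  (equivIcoMod (α := ℝ) (p := 1) one_pos 0 (b - a)).2.2.trans_eq (zero_add 1)

lemma arcLen_coe (x y : ℝ) : arcLen (x : Circle1) (y : Circle1) = toIcoMod one_pos 0 (y - x) := by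
  rw [arcLen, ← AddCircle.coe_sub, equivIcoMod_coe]

lemma coe_arcLen (a b : Circle1) : ((arcLen a b : ℝ) : Circle1) = b - a := by
  induction a using induction_on with | H x =>
  induction b using induction_on with | H y =>
  rw [arcLen_coe, ← self_sub_toIcoDiv_zsmul, AddCircle.coe_sub, ← AddCircle.coe_sub]
  simp

lemma add_arcLen (a b : Circle1) : a + ((arcLen a b : ℝ) : Circle1) = b := by
  rw [coe_arcLen, add_sub_cancel]

lemma arcLen_add_coe (a : Circle1) {t : ℝ} (h0 : 0 ≤ t) (h1 : t < 1) :
    arcLen a (a + (t : Circle1)) = t := by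
  rw [arcLen, add_sub_cancel_left, equivIcoMod_coe]
  exact (toIcoMod_eq_self one_pos).mpr ⟨h0, by simpa using h1⟩

lemma arcLen_sub_coe (a : Circle1) {t : ℝ} (h0 : 0 ≤ t) (h1 : t < 1) :
    arcLen (a - (t : Circle1)) a = t := by
  simpa using arcLen_add_coe (a - (t : Circle1)) h0 h1

lemma arcLen_self (a : Circle1) : arcLen a a = 0 := by
  simpa using arcLen_add_coe a le_rfl one_pos

lemma arcLen_injective (a : Circle1) : Function.Injective (arcLen a) := fun x y h => by
  rw [← add_arcLen a x, ← add_arcLen a y, h]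

lemma arcLen_eq_zero_iff {a b : Circle1} : arcLen a b = 0 ↔ a = b := by
  rw [← arcLen_self a, (arcLen_injective a).eq_iff, eq_comm]

lemma arcLen_pos {a b : Circle1} (h : a ≠ b) : 0 < arcLen a b :=
  (arcLen_nonneg a b).lt_of_ne' (arcLen_eq_zero_iff.not.mpr h)

lemma arcLen_add_arcLen (a b c : Circle1) :
    arcLen a b + arcLen b c = arcLen a c ∨ arcLen a b + arcLen b c = arcLen a c + 1 := by
  have hk : ((arcLen a b + arcLen b c - arcLen a c : ℝ) : Circle1) = 0 := by
    rw [AddCircle.coe_sub, AddCircle.coe_add, coe_arcLen, coe_arcLen, coe_arcLen]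
    abel
  obtain ⟨k, hk⟩ := (eq_zero_iff _).mp hk
  have hkr : (k : ℝ) = arcLen a b + arcLen b c - arcLen a c := by simpa using hk
  have := arcLen_nonneg a b; have := arcLen_nonneg b c; have := arcLen_nonneg a c
  have := arcLen_lt_one a b; have := arcLen_lt_one b c; have := arcLen_lt_one a c
  have hk1 : -1 < k := by exact_mod_cast (show (-1 : ℝ) < k by linarith)
  have hk2 : k < 2 := by exact_mod_cast (show (k : ℝ) < 2 by linarith)
  interval_cases k
  · left; push_cast at hkr; linarith
  · right; push_cast at hkr; linarith

lemma arcLen_add_arcLen_swap {a b : Circle1} (h : a ≠ b) : arcLen a b + arcLen b a = 1 := by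
  have := arcLen_pos h; have := arcLen_pos h.symm
  rcases arcLen_add_arcLen a b a with h' | h' <;> rw [arcLen_self] at h' <;> linarith

lemma arcLen_eq_sub {z a x : Circle1} (h : arcLen z a ≤ arcLen z x) :
    arcLen a x = arcLen z x - arcLen z a := by
  have := arcLen_lt_one a x
  rcases arcLen_add_arcLen z a x with hc | hc <;> linarith

lemma arcLen_eq_sub_add_one {z a x : Circle1} (h : arcLen z x < arcLen z a) :
    arcLen a x = arcLen z x - arcLen z a + 1 := by
  have := arcLen_nonneg a x
  rcases arcLen_add_arcLen z a x with hc | hc <;> linarith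

lemma btw_iff_arcLen_le {a b : Circle1} (h : a ≠ b) (x : Circle1) :
    btw a x b ↔ arcLen a x ≤ arcLen a b := by
  induction a using induction_on with | H a' =>
  induction b using induction_on with | H b' =>
  induction x using induction_on with | H x' =>
  rw [btw_coe_iff', arcLen_coe, arcLen_coe]
  have hne : ¬ (0 : ℝ) ≡ (b' - a') [PMOD (1:ℝ)] := by
    rintro ⟨k, l, hkl⟩
    apply h
    rw [← sub_eq_zero, ← AddCircle.coe_sub, eq_zero_iff]
    exact ⟨l - k, by simp at hkl ⊢; linarith⟩
  rw [← (AddCommGroup.not_modEq_iff_toIcoMod_eq_toIocMod one_pos).mp hne]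

end ArcLength

@[simp] lemma lep_false (ψ : V → Circle1 × Circle1) (v : V) : lep ψ (v, false) = (ψ v).1 := rfl

@[simp] lemma lep_true (ψ : V → Circle1 × Circle1) (v : V) : lep ψ (v, true) = (ψ v).2 := rfl

section Arcs

variable {a b p q x z : Circle1}

lemma arcPts_eq (c : Circle1 × Circle1) : arcPts c = arcSet c.1 c.2 := rfl

@[simp] lemma left_mem_arcSet (a b : Circle1) : a ∈ arcSet a b := btw_refl_left a b

@[simp] lemma right_mem_arcSet (a b : Circle1) : b ∈ arcSet a b := btw_refl_right a b

lemma arcSet_self (a : Circle1) : arcSet a a = Set.univ :=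
  Set.eq_univ_of_forall fun x => btw_refl_left_right a x

lemma ne_of_notMem_arcSet (hz : z ∉ arcSet a b) : a ≠ b := by
  rintro rfl
  exact hz (arcSet_self a ▸ Set.mem_univ z)

lemma mem_arcSet_iff (hab : a ≠ b) : x ∈ arcSet a b ↔ arcLen a x ≤ arcLen a b :=
  btw_iff_arcLen_le hab x

lemma mem_arcSet_iff_of_le (hab : a ≠ b) (h : arcLen z a ≤ arcLen z b) :
    x ∈ arcSet a b ↔ arcLen z a ≤ arcLen z x ∧ arcLen z x ≤ arcLen z b := by
  rw [mem_arcSet_iff hab, arcLen_eq_sub h]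
  have := arcLen_lt_one z b; have := arcLen_nonneg z x
  rcases le_or_gt (arcLen z a) (arcLen z x) with hx | hx
  · rw [arcLen_eq_sub hx]
    exact ⟨fun h' => ⟨hx, by linarith⟩, fun h' => by linarith [h'.2]⟩
  · rw [arcLen_eq_sub_add_one hx]
    exact ⟨fun h' => by linarith, fun h' => by linarith [h'.1]⟩

lemma mem_arcSet_iff_of_lt (h : arcLen z b < arcLen z a) :
    x ∈ arcSet a b ↔ arcLen z a ≤ arcLen z x ∨ arcLen z x ≤ arcLen z b := by
  have hab : a ≠ b := by rintro rfl; exact lt_irrefl _ h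
  rw [mem_arcSet_iff hab, arcLen_eq_sub_add_one h]
  have := arcLen_nonneg z x; have := arcLen_lt_one z x; have := arcLen_nonneg z b
  rcases le_or_gt (arcLen z a) (arcLen z x) with hx | hx
  · rw [arcLen_eq_sub hx]
    exact ⟨fun _ => Or.inl hx, fun _ => by linarith⟩
  · rw [arcLen_eq_sub_add_one hx]
    constructor
    · intro; right; linarith
    · rintro (h' | h') <;> linarith

lemma mem_arcSet_iff_of_notMem (hz : z ∉ arcSet a b) :
    arcLen z a < arcLen z b ∧
      ∀ x, x ∈ arcSet a b ↔ arcLen z a ≤ arcLen z x ∧ arcLen z x ≤ arcLen z b := by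
  have hab := ne_of_notMem_arcSet hz
  rcases lt_or_gt_of_ne ((arcLen_injective z).ne hab) with h | h
  · exact ⟨h, fun x => mem_arcSet_iff_of_le hab h.le⟩
  · refine absurd ((mem_arcSet_iff_of_lt h).mpr ?_) hz
    exact Or.inr (by rw [arcLen_self]; exact arcLen_nonneg z b)

lemma arcSet_subset_or_union_eq_univ (hab : a ≠ b) (hpq : p ≠ q)
    (hp : p ∈ arcSet a b) (hq : q ∈ arcSet a b) :
    arcSet p q ⊆ arcSet a b ∨ arcSet a b ∪ arcSet p q = Set.univ := by
  rw [mem_arcSet_iff hab] at hp hq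
  rcases le_or_gt (arcLen a p) (arcLen a q) with h | h
  · left
    intro x hx
    rw [mem_arcSet_iff_of_le hpq h] at hx
    rw [mem_arcSet_iff hab]
    linarith [hx.2]
  · right
    refine Set.eq_univ_of_forall fun x => ?_
    rw [Set.mem_union, mem_arcSet_iff hab, mem_arcSet_iff_of_lt h]
    rcases le_or_gt (arcLen a x) (arcLen a b) with hx | hx
    · exact Or.inl hx
    · exact Or.inr (Or.inl (by linarith))

lemma arcSet_subset_or_inter_eq_empty (hab : a ≠ b) (hpq : p ≠ q)
    (hp : p ∉ arcSet a b) (hq : q ∉ arcSet a b) :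
    arcSet a b ⊆ arcSet p q ∨ arcSet a b ∩ arcSet p q = ∅ := by
  rw [mem_arcSet_iff hab, not_le] at hp hq
  rcases le_or_gt (arcLen a p) (arcLen a q) with h | h
  · right
    refine Set.eq_empty_of_forall_notMem fun x ⟨hx₁, hx₂⟩ => ?_
    rw [mem_arcSet_iff hab] at hx₁
    rw [mem_arcSet_iff_of_le hpq h] at hx₂
    linarith [hx₂.1]
  · left
    intro x hx
    rw [mem_arcSet_iff hab] at hx
    rw [mem_arcSet_iff_of_lt h]
    exact Or.inr (by linarith)

lemma mem_of_arcSet_union_eq_univ (hab : a ≠ b) (hpq : p ≠ q)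
    (h : arcSet a b ∪ arcSet p q = Set.univ) : p ∈ arcSet a b ∧ q ∈ arcSet a b := by
  have := arcLen_nonneg a b; have := arcLen_lt_one a b
  have := arcLen_nonneg a q; have := arcLen_lt_one a q; have := arcLen_lt_one a p
  have hcov : ∀ t : ℝ, arcLen a b < t → t < 1 → a + (t : Circle1) ∈ arcSet p q := by
    intro t ht ht1
    refine (Set.eq_univ_iff_forall.mp h _).resolve_left fun hx => ?_
    rw [mem_arcSet_iff hab, arcLen_add_coe a (by linarith) ht1] at hx
    linarith
  -- in each case a point with coordinate in `(b, 1)` lies strictly between `q` and `p`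
  simp only [mem_arcSet_iff hab]
  constructor <;> by_contra hc <;> rw [not_le] at hc <;>
    rcases le_or_gt (arcLen a p) (arcLen a q) with h' | h'
  · have ht := hcov ((arcLen a b + arcLen a p) / 2) (by linarith) (by linarith)
    rw [mem_arcSet_iff_of_le hpq h', arcLen_add_coe a (by linarith) (by linarith)] at ht
    linarith [ht.1]
  · have := le_max_left (arcLen a b) (arcLen a q); have := le_max_right (arcLen a b) (arcLen a q)
    have := max_lt hc h'
    have ht := hcov ((max (arcLen a b) (arcLen a q) + arcLen a p) / 2) (by linarith)
      (by linarith)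
    rw [mem_arcSet_iff_of_lt h', arcLen_add_coe a (by linarith) (by linarith)] at ht
    rcases ht with ht | ht <;> linarith
  · have ht := hcov ((arcLen a q + 1) / 2) (by linarith) (by linarith)
    rw [mem_arcSet_iff_of_le hpq h', arcLen_add_coe a (by linarith) (by linarith)] at ht
    linarith [ht.2]
  · have ht := hcov ((arcLen a q + arcLen a p) / 2) (by linarith) (by linarith)
    rw [mem_arcSet_iff_of_lt h', arcLen_add_coe a (by linarith) (by linarith)] at ht
    rcases ht with ht | ht <;> linarith

lemma notMem_of_arcSet_subset (hab : a ≠ b) (hpq : p ≠ q) (hpa : p ≠ a) (hqa : q ≠ a)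
    (hqb : q ≠ b) (h : arcSet a b ⊆ arcSet p q) :
    p ∉ arcSet a b ∧ q ∉ arcSet a b := by
  have := arcLen_lt_one a b; have hP := arcLen_pos hpa.symm; have hQ := arcLen_pos hqa.symm
  have hwrap : arcLen a q < arcLen a p := by
    by_contra hc
    have ha := h (left_mem_arcSet a b)
    rw [mem_arcSet_iff_of_le hpq (not_lt.mp hc), arcLen_self] at ha
    linarith [ha.1]
  have hgap : ∀ t : ℝ, arcLen a q < t → t < arcLen a p → t ≤ arcLen a b → False := by
    intro t ht₁ ht₂ ht₃
    have ht₀ : 0 ≤ t := by linarith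
    have hmem : a + (t : Circle1) ∈ arcSet a b := by
      rwa [mem_arcSet_iff hab, arcLen_add_coe a ht₀ (by linarith)]
    have ht := h hmem
    rw [mem_arcSet_iff_of_lt hwrap, arcLen_add_coe a (by linarith) (by linarith)] at ht
    rcases ht with ht | ht <;> linarith
  have hQL : arcLen a q ≠ arcLen a b := (arcLen_injective a).ne hqb
  simp only [mem_arcSet_iff hab, not_le]
  constructor <;> by_contra hc <;> rw [not_lt] at hc
  · exact hgap ((arcLen a q + arcLen a p) / 2) (by linarith) (by linarith) (by linarith)
  · have hQL' := lt_of_le_of_ne hc hQL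
    have := min_le_left (arcLen a p) (arcLen a b); have := min_le_right (arcLen a p) (arcLen a b)
    have := lt_min hwrap hQL'
    exact hgap ((arcLen a q + min (arcLen a p) (arcLen a b)) / 2) (by linarith) (by linarith)
      (by linarith)

lemma arcSet_inter_eq_empty (hab : a ≠ b) (hpq : p ≠ q) (hp : p ∉ arcSet a b)
    (hq : q ∉ arcSet a b) (ha : a ∉ arcSet p q) : arcSet a b ∩ arcSet p q = ∅ :=
  (arcSet_subset_or_inter_eq_empty hab hpq hp hq).resolve_left fun h => ha (h (left_mem_arcSet a b))

lemma mem_xor_of_arcsOverlap (hab : a ≠ b) (hpq : p ≠ q) (h : ArcsOverlap (a, b) (p, q)) :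
    (p ∈ arcSet a b ∧ q ∉ arcSet a b) ∨ (q ∈ arcSet a b ∧ p ∉ arcSet a b) := by
  obtain ⟨hne, hsub, hsub', hcov⟩ := h
  by_cases hp : p ∈ arcSet a b <;> by_cases hq : q ∈ arcSet a b
  · rcases arcSet_subset_or_union_eq_univ hab hpq hp hq with h | h
    exacts [absurd h hsub', absurd h hcov]
  · exact Or.inl ⟨hp, hq⟩
  · exact Or.inr ⟨hq, hp⟩
  · rcases arcSet_subset_or_inter_eq_empty hab hpq hp hq with h | h
    exacts [absurd h hsub, absurd h (Set.nonempty_iff_ne_empty.mp hne)]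

end Arcs

section ArcConstructions

variable {A B e s x y : Circle1} {δ t : ℝ}

lemma sub_arcLen (a b : Circle1) : b - ((arcLen a b : ℝ) : Circle1) = a := by
  rw [coe_arcLen, sub_sub_cancel]

lemma mem_arcSet_widen (hδ : 0 ≤ δ) (h : 2 * δ < arcLen B A) :
    x ∈ arcSet (A - (δ : Circle1)) (B + (δ : Circle1)) ↔
      x ∈ arcSet A B ∨ arcLen B x ≤ δ ∨ arcLen x A ≤ δ := by
  have hAB : A ≠ B := by rintro rfl; rw [arcLen_self] at h; linarith
  have hsum := arcLen_add_arcLen_swap hAB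
  have := arcLen_pos hAB
  set o := A - (δ : Circle1)
  have hoA : arcLen o A = δ := arcLen_sub_coe A hδ (by linarith)
  have hoB : arcLen o B = δ + arcLen A B := by
    have := arcLen_nonneg o B
    rcases arcLen_add_arcLen o A B with h' | h' <;> linarith
  have hoB' : arcLen o (B + (δ : Circle1)) = δ + arcLen A B + δ := by
    have := arcLen_nonneg o (B + (δ : Circle1))
    have hB := arcLen_add_coe B hδ (by linarith)
    rcases arcLen_add_arcLen o B (B + (δ : Circle1)) with h' | h' <;> linarith
  have ho : o ≠ B + (δ : Circle1) := fun heq => by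
    rw [← heq, arcLen_self] at hoB'; linarith
  rw [mem_arcSet_iff ho, mem_arcSet_iff hAB, hoB']
  have := arcLen_nonneg o x; have := arcLen_lt_one o x
  have := arcLen_nonneg A x; have := arcLen_lt_one A x
  have := arcLen_nonneg B x; have := arcLen_lt_one B x
  have := arcLen_nonneg x A; have := arcLen_lt_one x A
  have hAx := arcLen_add_arcLen o A x
  have hBx := arcLen_add_arcLen o B x
  have hxA := arcLen_add_arcLen o x A
  rw [hoA] at hAx hxA
  rw [hoB] at hBx
  constructor
  · intro hx
    rcases le_or_gt (δ + arcLen A B) (arcLen o x) with h₁ | h₁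
    · right; left; rcases hBx with h' | h' <;> linarith
    rcases le_or_gt δ (arcLen o x) with h₂ | h₂
    · left; rcases hAx with h' | h' <;> linarith
    · right; right; rcases hxA with h' | h' <;> linarith
  · rintro (hx | hx | hx)
    · rcases hAx with h' | h' <;> linarith
    · rcases hBx with h' | h' <;> linarith
    · rcases hxA with h' | h' <;> linarith

lemma add_coe_mem_arcSet (hy : y ∈ arcSet s e) (ht : 0 ≤ t) (hte : t ≤ arcLen y e) :
    y + (t : Circle1) ∈ arcSet s e := by
  rcases eq_or_ne s e with rfl | hse
  · simp [arcSet_self]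
  rw [mem_arcSet_iff hse] at hy ⊢
  have := arcLen_lt_one y e; have := arcLen_nonneg s (y + (t : Circle1))
  have hyt := arcLen_add_coe y ht (by linarith)
  rcases arcLen_add_arcLen s y e with h | h <;>
    rcases arcLen_add_arcLen s y (y + (t : Circle1)) with h' | h' <;> linarith

lemma sub_coe_mem_arcSet (hy : y ∈ arcSet s e) (ht : 0 ≤ t) (hts : t ≤ arcLen s y) :
    y - (t : Circle1) ∈ arcSet s e := by
  rcases eq_or_ne s e with rfl | hse
  · simp [arcSet_self]
  rw [mem_arcSet_iff hse] at hy ⊢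
  have := arcLen_lt_one s y; have := arcLen_lt_one s (y - (t : Circle1))
  have hyt := arcLen_sub_coe y ht (by linarith)
  rcases arcLen_add_arcLen s (y - (t : Circle1)) y with h | h <;> linarith

lemma exists_eq_add_of_mem_widen (hδ : 0 ≤ δ) (h : 2 * δ < arcLen B A)
    (hx : x ∈ arcSet (A - (δ : Circle1)) (B + (δ : Circle1))) :
    x ∈ arcSet A B ∨ ∃ e ∈ ({A, B} : Set Circle1), ∃ t : ℝ, |t| ≤ δ ∧ x = e + (t : Circle1) := by
  rcases (mem_arcSet_widen hδ h).mp hx with hx | hx | hx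
  · exact Or.inl hx
  · exact Or.inr ⟨B, by simp, _, by rwa [abs_of_nonneg (arcLen_nonneg B x)],
      (add_arcLen B x).symm⟩
  · refine Or.inr ⟨A, by simp, -arcLen x A, by rwa [abs_neg, abs_of_nonneg (arcLen_nonneg x A)], ?_⟩
    rw [AddCircle.coe_neg, ← sub_eq_add_neg, sub_arcLen]

lemma exists_add_coe_notMem {E : Set Circle1} (hE : E.Finite) (z : Circle1) {a b : ℝ}
    (ha : 0 ≤ a) (hab : a < b) (hb : b ≤ 1) : ∃ γ, a < γ ∧ γ < b ∧ z + (γ : Circle1) ∉ E := by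
  obtain ⟨γ, ⟨hγa, hγb⟩, hγ⟩ := ((Set.Ioo_infinite hab).sdiff (hE.image (arcLen z))).nonempty
  refine ⟨γ, hγa, hγb, fun h => hγ ⟨_, h, ?_⟩⟩
  exact arcLen_add_coe z (by linarith) (by linarith)

lemma exists_arcSet_eq_biUnion {ι : Type*} (S : Finset ι) (c : ι → Circle1 × Circle1) {i₀ : ι}
    (hi₀ : i₀ ∈ S) (hmeet : ∀ i ∈ S, (arcPts (c i) ∩ arcPts (c i₀)).Nonempty) {z : Circle1}
    (hz : ∀ i ∈ S, z ∉ arcPts (c i)) :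
    ∃ i ∈ S, ∃ j ∈ S, arcSet (c i).1 (c j).2 = ⋃ k ∈ S, arcPts (c k) := by
  simp only [arcPts_eq] at hmeet hz ⊢
  have hI := fun k (hk : k ∈ S) => mem_arcSet_iff_of_notMem (hz k hk)
  obtain ⟨i, hi, hmin⟩ := S.exists_min_image (fun k => arcLen z (c k).1) ⟨i₀, hi₀⟩
  obtain ⟨j, hj, hmax⟩ := S.exists_max_image (fun k => arcLen z (c k).2) ⟨i₀, hi₀⟩
  have hlt : arcLen z (c i).1 < arcLen z (c j).2 :=
    (hmin i₀ hi₀).trans_lt ((hI i₀ hi₀).1.trans_le (hmax i₀ hi₀))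
  have hne : (c i).1 ≠ (c j).2 := fun h => by rw [h] at hlt; exact lt_irrefl _ hlt
  refine ⟨i, hi, j, hj, Set.ext fun x => ?_⟩
  rw [mem_arcSet_iff_of_le hne hlt.le, Set.mem_iUnion₂]
  constructor
  · rintro ⟨h₁, h₂⟩
    by_cases hxi : arcLen z x ≤ arcLen z (c i).2
    · exact ⟨i, hi, ((hI i hi).2 x).mpr ⟨h₁, hxi⟩⟩
    by_cases hxj : arcLen z (c j).1 ≤ arcLen z x
    · exact ⟨j, hj, ((hI j hj).2 x).mpr ⟨hxj, h₂⟩⟩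
    -- the gap between the arcs `i` and `j` is covered by the arc `i₀`, which meets both
    obtain ⟨y, hyi, hyi₀⟩ := hmeet i hi
    obtain ⟨y', hyj, hyj₀⟩ := hmeet j hj
    rw [(hI i hi).2] at hyi; rw [(hI i₀ hi₀).2] at hyi₀
    rw [(hI j hj).2] at hyj; rw [(hI i₀ hi₀).2] at hyj₀
    exact ⟨i₀, hi₀, ((hI i₀ hi₀).2 x).mpr ⟨by linarith, by linarith⟩⟩
  · rintro ⟨k, hk, hx⟩
    rw [(hI k hk).2] at hx
    exact ⟨(hmin k hk).trans hx.1, hx.2.trans (hmax k hk)⟩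

lemma arcSet_extend {z s e s' e' : Circle1} {γ₁ γ₂ : ℝ} (hz : z ∉ arcSet s e)
    (hz' : z ∉ arcSet s' e') (hss' : arcLen z s ≤ arcLen z s') (hs'e : arcLen z s' ≤ arcLen z e)
    (hee' : arcLen z e < arcLen z e') (hγ₁ : arcLen z e' < γ₁) (hγ₁₂ : γ₁ < γ₂) (hγ₂ : γ₂ < 1) :
    arcSet s e ⊆ arcSet (z + (γ₁ : Circle1)) e ∧ arcSet s' e' ⊆ arcSet s' (z + (γ₂ : Circle1)) ∧
      arcSet (z + (γ₁ : Circle1)) e ∪ arcSet s' (z + (γ₂ : Circle1)) = Set.univ ∧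
      (∀ x ∈ arcSet (z + (γ₁ : Circle1)) e, x ∉ arcSet s e → x ∉ arcSet s' e') ∧
      (∀ x ∈ arcSet s' (z + (γ₂ : Circle1)), x ∉ arcSet s' e' → x ∉ arcSet s e) := by
  have hv := (mem_arcSet_iff_of_notMem hz).2
  have hu := (mem_arcSet_iff_of_notMem hz').2
  have := arcLen_nonneg z e'
  have hγ₁' := arcLen_add_coe z (t := γ₁) (by linarith) (by linarith)
  have hγ₂' := arcLen_add_coe z (t := γ₂) (by linarith) hγ₂
  have hv' : ∀ x, x ∈ arcSet (z + (γ₁ : Circle1)) e ↔ γ₁ ≤ arcLen z x ∨ arcLen z x ≤ arcLen z e :=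
    fun x => by rw [mem_arcSet_iff_of_lt (by rw [hγ₁']; linarith), hγ₁']
  have hlt : arcLen z s' < arcLen z (z + (γ₂ : Circle1)) := by rw [hγ₂']; linarith
  have hu' : ∀ x, x ∈ arcSet s' (z + (γ₂ : Circle1)) ↔ arcLen z s' ≤ arcLen z x ∧ arcLen z x ≤ γ₂ :=
    fun x => by rw [mem_arcSet_iff_of_le (fun h => by rw [h] at hlt; exact lt_irrefl _ hlt) hlt.le,
      hγ₂']
  simp only [Set.subset_def, hv, hu, hv', hu', Set.eq_univ_iff_forall, Set.mem_union, not_and_or,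
    not_le]
  refine ⟨fun x hx => Or.inr hx.2, fun x hx => ⟨hx.1, by linarith [hx.2]⟩, fun x => ?_,
    fun x hx hxv => ?_, fun x hx hxu => ?_⟩
  · by_cases h : arcLen z x ≤ arcLen z e
    · exact Or.inl (Or.inr h)
    by_cases h' : γ₁ ≤ arcLen z x
    · exact Or.inl (Or.inl h')
    · exact Or.inr ⟨by linarith, by linarith⟩
  · rcases hx with hx | hx
    · exact Or.inr (by linarith)
    · rcases hxv with hxv | hxv
      · exact Or.inl (by linarith)
      · linarith
  · rcases hxu with hxu | hxu
    · linarith [hx.1]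
    · exact Or.inr (by linarith)

end ArcConstructions

def Separated (m : ℝ) (E : Set Circle1) : Prop := ∀ x ∈ E, ∀ y ∈ E, x ≠ y → m ≤ arcLen x y

lemma exists_separated {E : Set Circle1} (hE : E.Finite) : ∃ m, 0 < m ∧ m ≤ 1 ∧ Separated m E := by
  classical
  let D := insert 1 (((hE.prod hE).toFinset.filter fun p => p.1 ≠ p.2).image
    fun p => arcLen p.1 p.2)
  have hD : D.Nonempty := Finset.insert_nonempty _ _
  refine ⟨D.min' hD, ?_, D.min'_le 1 (Finset.mem_insert_self _ _), fun x hx y hy hxy => ?_⟩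
  · obtain h | h := Finset.mem_insert.mp (D.min'_mem hD)
    · rw [h]; exact one_pos
    · obtain ⟨p, hp, hpD⟩ := Finset.mem_image.mp h
      rw [← hpD]
      exact arcLen_pos (Finset.mem_filter.mp hp).2
  · exact D.min'_le _ (Finset.mem_insert_of_mem (Finset.mem_image.mpr
      ⟨(x, y), Finset.mem_filter.mpr ⟨by simp [hx, hy], hxy⟩, rfl⟩))

namespace Separated

variable {A B A' B' e e' e₀ s x : Circle1} {δ δ' t t' m : ℝ} {E : Set Circle1}

lemma eq_of_arcLen_lt (hE : Separated m E) (he : e ∈ E) (he' : e' ∈ E) (h : arcLen e e' < m) :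
    e = e' := by
  by_contra hne
  exact (hE e he e' he' hne).not_gt h

lemma eq_of_add_coe_eq (hE : Separated m E) (hm : m ≤ 1) (he : e ∈ E) (he' : e' ∈ E)
    (ht : |t| < m / 2) (ht' : |t'| < m / 2) (h : e + (t : Circle1) = e' + (t' : Circle1)) :
    e = e' ∧ t = t' := by
  wlog h₀ : 0 ≤ t' - t generalizing e e' t t'
  · obtain ⟨rfl, rfl⟩ := this he' he ht' ht h.symm (by linarith)
    exact ⟨rfl, rfl⟩
  have hs : t' - t < m := by linarith [abs_lt.mp ht, abs_lt.mp ht']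
  have hlen : arcLen e' e = t' - t := by
    rw [show e = e' + ((t' - t : ℝ) : Circle1) by
      rw [AddCircle.coe_sub, add_sub, ← h, add_sub_cancel_right]]
    exact arcLen_add_coe e' h₀ (by linarith)
  obtain rfl := hE.eq_of_arcLen_lt he' he (by linarith)
  exact ⟨rfl, by rw [arcLen_self] at hlen; linarith⟩

lemma mem_arcSet_of_add_coe_mem (hE : Separated m E) (hm : m ≤ 1) (he₀ : e₀ ∈ E) (hs : s ∈ E)
    (he : e ∈ E) (ht : |t| < m) (h : e₀ + (t : Circle1) ∈ arcSet s e) : e₀ ∈ arcSet s e := by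
  by_contra hn
  have hse := ne_of_notMem_arcSet hn
  have he₀s : e₀ ≠ s := by rintro rfl; exact hn (left_mem_arcSet _ _)
  have he₀e : e₀ ≠ e := by rintro rfl; exact hn (right_mem_arcSet _ _)
  rw [mem_arcSet_iff hse] at h hn
  rw [abs_lt] at ht
  rcases le_or_gt 0 t with h₀ | h₀
  · -- moving forward from `e₀` into the arc crosses its start `s`
    have := arcLen_add_coe e₀ h₀ (by linarith)
    have := arcLen_nonneg s (e₀ + (t : Circle1))
    have := hE e₀ he₀ s hs he₀s
    have := arcLen_add_arcLen_swap he₀s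
    rcases arcLen_add_arcLen s e₀ (e₀ + (t : Circle1)) with h' | h' <;> linarith
  · -- moving backward from `e₀` into the arc crosses its end `e`
    have hx : e₀ + (t : Circle1) = e₀ - ((-t : ℝ) : Circle1) := by
      rw [AddCircle.coe_neg, sub_neg_eq_add]
    have := arcLen_sub_coe e₀ (t := -t) (by linarith) (by linarith)
    rw [← hx] at this
    have := hE e he e₀ he₀ he₀e.symm
    have := arcLen_lt_one e e₀
    rcases arcLen_add_arcLen s (e₀ + (t : Circle1)) e₀ with h' | h' <;>
      rcases arcLen_add_arcLen s e e₀ with h'' | h'' <;> linarith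

lemma widen_subset (hE : Separated m E) (hA : A ∈ E) (hB : B ∈ E) (hA' : A' ∈ E) (hB' : B' ∈ E)
    (hAB : A ≠ B) (hAB' : A' ≠ B') (hsub : arcSet A B ⊆ arcSet A' B') (hδ : 0 ≤ δ) (hδδ' : δ ≤ δ')
    (hδ' : δ' < m / 2) :
    arcSet (A - (δ : Circle1)) (B + (δ : Circle1)) ⊆
      arcSet (A' - (δ' : Circle1)) (B' + (δ' : Circle1)) := by
  intro x hx
  rw [mem_arcSet_widen hδ (by linarith [hE B hB A hA hAB.symm])] at hx
  rw [mem_arcSet_widen (hδ.trans hδδ') (by linarith [hE B' hB' A' hA' hAB'.symm])]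
  rcases hx with hx | hx | hx
  · exact Or.inl (hsub hx)
  · rcases eq_or_ne B B' with rfl | hBB'
    · exact Or.inr (Or.inl (hx.trans hδδ'))
    · refine Or.inl (add_arcLen B x ▸ add_coe_mem_arcSet (hsub (right_mem_arcSet A B))
        (arcLen_nonneg B x) ?_)
      linarith [hE B hB B' hB' hBB']
  · rcases eq_or_ne A A' with rfl | hAA'
    · exact Or.inr (Or.inr (hx.trans hδδ'))
    · refine Or.inl (sub_arcLen x A ▸ sub_coe_mem_arcSet (hsub (left_mem_arcSet A B))
        (arcLen_nonneg x A) ?_)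
      linarith [hE A' hA' A hA (Ne.symm hAA')]

lemma inter_nonempty_of_widen (hE : Separated m E) (hm : m ≤ 1) {A₁ B₁ A₂ B₂ : Circle1}
    {δ₁ δ₂ : ℝ} (hA₁ : A₁ ∈ E) (hB₁ : B₁ ∈ E) (hA₂ : A₂ ∈ E) (hB₂ : B₂ ∈ E) (hAB₁ : A₁ ≠ B₁)
    (hAB₂ : A₂ ≠ B₂) (hδ₁ : 0 ≤ δ₁) (hδ₁m : δ₁ < m / 2) (hδ₂ : 0 ≤ δ₂) (hδ₂m : δ₂ < m / 2)
    (hx₁ : x ∈ arcSet (A₁ - (δ₁ : Circle1)) (B₁ + (δ₁ : Circle1)))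
    (hx₂ : x ∈ arcSet (A₂ - (δ₂ : Circle1)) (B₂ + (δ₂ : Circle1))) :
    (arcSet A₁ B₁ ∩ arcSet A₂ B₂).Nonempty := by
  have hend : ∀ {A B e : Circle1}, A ∈ E → B ∈ E → e ∈ ({A, B} : Set Circle1) →
      e ∈ E ∧ e ∈ arcSet A B := by
    rintro A B e hA hB (rfl | rfl)
    exacts [⟨hA, left_mem_arcSet _ _⟩, ⟨hB, right_mem_arcSet _ _⟩]
  rcases exists_eq_add_of_mem_widen hδ₁ (by linarith [hE B₁ hB₁ A₁ hA₁ hAB₁.symm]) hx₁ with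
    hx₁ | ⟨e₁, he₁, t₁, ht₁, rfl⟩ <;>
  rcases exists_eq_add_of_mem_widen hδ₂ (by linarith [hE B₂ hB₂ A₂ hA₂ hAB₂.symm]) hx₂ with
    hx₂ | ⟨e₂, he₂, t₂, ht₂, hx⟩
  · exact ⟨x, hx₁, hx₂⟩
  · obtain ⟨he₂E, he₂⟩ := hend hA₂ hB₂ he₂
    subst hx
    exact ⟨e₂, hE.mem_arcSet_of_add_coe_mem hm he₂E hA₁ hB₁ (by linarith) hx₁, he₂⟩
  · obtain ⟨he₁E, he₁⟩ := hend hA₁ hB₁ he₁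
    exact ⟨e₁, he₁, hE.mem_arcSet_of_add_coe_mem hm he₁E hA₂ hB₂ (by linarith) hx₂⟩
  · obtain ⟨he₁E, he₁⟩ := hend hA₁ hB₁ he₁
    obtain ⟨he₂E, he₂⟩ := hend hA₂ hB₂ he₂
    obtain ⟨rfl, -⟩ := hE.eq_of_add_coe_eq hm he₁E he₂E (by linarith) (by linarith) hx
    exact ⟨e₁, he₁, he₂⟩

lemma distinctEndpointsOn_widen (hE : Separated m E) (hm : m ≤ 1) {A B : V → Circle1}
    {δ : V → ℝ} (hA : ∀ v, A v ∈ E) (hB : ∀ v, B v ∈ E) (hδ : ∀ v, 0 < δ v ∧ δ v < m / 2)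
    (hδinj : Function.Injective δ) :
    DistinctEndpointsOn Set.univ fun v => (A v - (δ v : Circle1), B v + (δ v : Circle1)) := by
  have hoff : ∀ {e e' : Circle1} {t t' : ℝ}, e ∈ E → e' ∈ E → |t| < m / 2 → |t'| < m / 2 →
      e + (t : Circle1) = e' + (t' : Circle1) → t = t' :=
    fun he he' ht ht' h => (hE.eq_of_add_coe_eq hm he he' ht ht' h).2
  have habs : ∀ v, |δ v| < m / 2 ∧ |-δ v| < m / 2 := fun v => by
    rw [abs_neg, abs_of_pos (hδ v).1]; exact ⟨(hδ v).2, (hδ v).2⟩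
  have hsub : ∀ v, A v - (δ v : Circle1) = A v + ((-δ v : ℝ) : Circle1) :=
    fun v => by rw [AddCircle.coe_neg, sub_eq_add_neg]
  rintro ⟨u, _ | _⟩ - ⟨v, _ | _⟩ - h <;> simp only [lep_false, lep_true] at h
  · rw [hsub, hsub] at h
    rw [hδinj (neg_inj.mp (hoff (hA u) (hA v) (habs u).2 (habs v).2 h))]
  · rw [hsub] at h
    linarith [hoff (hA u) (hB v) (habs u).2 (habs v).1 h, (hδ u).1, (hδ v).1]
  · rw [hsub] at h
    linarith [hoff (hB u) (hA v) (habs u).1 (habs v).2 h, (hδ u).1, (hδ v).1]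
  · rw [hδinj (hoff (hB u) (hB v) (habs u).1 (habs v).1 h)]

end Separated

section Chords

variable {a b x : Circle1} {c d : Circle1 × Circle1}

lemma sbtw_iff_btw_of_ne (hab : a ≠ b) (hxa : x ≠ a) (hxb : x ≠ b) : sbtw a x b ↔ btw a x b := by
  refine ⟨btw_of_sbtw, fun h => sbtw_of_btw_not_btw h fun h' => ?_⟩
  rcases btw_antisymm h h' with h'' | h'' | h''
  exacts [hxa h''.symm, hxb h'', hab h''.symm]

lemma onRight_iff : OnRight c d ↔ d.1 ∉ arcPts c ∧ d.2 ∉ arcPts c :=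
  and_congr sbtw_iff_not_btw sbtw_iff_not_btw

lemma onLeft_iff (hc : c.1 ≠ c.2) (h₁ : d.1 ≠ c.1) (h₂ : d.1 ≠ c.2) (h₃ : d.2 ≠ c.1)
    (h₄ : d.2 ≠ c.2) : OnLeft c d ↔ d.1 ∈ arcPts c ∧ d.2 ∈ arcPts c :=
  and_congr (sbtw_iff_btw_of_ne hc h₁ h₂) (sbtw_iff_btw_of_ne hc h₃ h₄)

lemma crosses_iff (hc : c.1 ≠ c.2) (h₁ : d.1 ≠ c.1) (h₂ : d.1 ≠ c.2) (h₃ : d.2 ≠ c.1)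
    (h₄ : d.2 ≠ c.2) :
    Crosses c d ↔ (d.1 ∈ arcPts c ∧ d.2 ∉ arcPts c) ∨ (d.2 ∈ arcPts c ∧ d.1 ∉ arcPts c) :=
  or_congr (and_congr (sbtw_iff_btw_of_ne hc h₁ h₂) sbtw_iff_not_btw)
    (and_congr (sbtw_iff_btw_of_ne hc h₃ h₄) sbtw_iff_not_btw)

end Chords

lemma exists_injective_nat_of_lt {ι α : Type*} [Fintype ι] [Preorder α] (g : ι → α) :
    ∃ f : ι → ℕ, Function.Injective f ∧ ∀ i j, g i < g j → f i < f j := by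
  classical
  let n := Fintype.card ι
  let e := Fintype.equivFin ι
  let rk : ι → ℕ := fun i => (Finset.univ.filter fun j => g j < g i).card
  have hrk : ∀ i j, g i < g j → rk i < rk j := fun i j h => by
    refine Finset.card_lt_card ⟨fun k hk => ?_, fun hsub => ?_⟩
    · simp only [Finset.mem_filter, Finset.mem_univ, true_and] at hk ⊢
      exact hk.trans h
    · have := hsub (Finset.mem_filter.mpr ⟨Finset.mem_univ _, h⟩)
      exact lt_irrefl _ (Finset.mem_filter.mp this).2
  -- lexicographic order on (rank, index)
  have hlex : ∀ i j, rk i < rk j → rk i * n + e i < rk j * n + e j := fun i j h =>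
    calc rk i * n + e i < rk i * n + n := Nat.add_lt_add_left (e i).isLt _
      _ = (rk i + 1) * n := by ring
      _ ≤ rk j * n + e j := (Nat.mul_le_mul_right n h).trans (Nat.le_add_right _ _)
  refine ⟨fun i => rk i * n + e i, fun i j hij => ?_, fun i j h => hlex i j (hrk i j h)⟩
  rcases lt_trichotomy (rk i) (rk j) with h | h | h
  · exact absurd hij (hlex i j h).ne
  · simp only [h, add_right_inj] at hij
    exact e.injective (Fin.ext hij)
  · exact absurd hij (hlex j i h).ne'

lemma exists_pos_lt_injective_of_lt {ι α : Type*} [Fintype ι] [Preorder α] (g : ι → α) {ε : ℝ}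
    (hε : 0 < ε) :
    ∃ δ : ι → ℝ, (∀ i, 0 < δ i ∧ δ i < ε) ∧ Function.Injective δ ∧
      ∀ i j, g i < g j → δ i < δ j := by
  obtain ⟨f, hf, hfg⟩ := exists_injective_nat_of_lt g
  let h : ℕ → ℝ := fun k => ε - ε / (k + 2)
  have hh : StrictMono h := fun k l hkl => by
    have : (k : ℝ) < l := by exact_mod_cast hkl
    simp only [h, sub_lt_sub_iff_left]
    exact div_lt_div_of_pos_left hε (by positivity) (by linarith)
  refine ⟨h ∘ f, fun i => ⟨?_, ?_⟩, hh.injective.comp hf, fun i j hij => hh (hfg i j hij)⟩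
  · simp only [Function.comp, h, sub_pos]
    exact div_lt_self hε (by linarith [(f i).cast_nonneg (α := ℝ)])
  · simp only [Function.comp, h, sub_lt_self_iff]
    positivity

section Relations

variable {G : SimpleGraph V} {u v : V}

lemma mem_cnbr : u ∈ cnbr G v ↔ u = v ∨ G.Adj v u := Iff.rfl

lemma self_mem_cnbr (v : V) : v ∈ cnbr G v := Set.mem_insert v _

lemma mem_cnbr_comm : u ∈ cnbr G v ↔ v ∈ cnbr G u := by
  rw [mem_cnbr, mem_cnbr, eq_comm, G.adj_comm]

lemma di_or_cs_or_cd_or_cc_or_ov (h : v ≠ u) :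
    Di G v u ∨ Cs G v u ∨ Cd G v u ∨ Cc G v u ∨ Ov G v u := by
  by_contra! h'
  exact h'.2.2.2.2 ⟨h, h'.1, h'.2.1, h'.2.2.1, h'.2.2.2.1⟩

lemma Cc.symm (h : Cc G v u) : Cc G u v :=
  ⟨h.1.symm, h.2.1.symm, Set.union_comm (cnbr G v) _ ▸ h.2.2.1, h.2.2.2.2, h.2.2.2.1⟩

lemma cd_iff_cs : Cd G v u ↔ Cs G u v := and_congr_left' ne_comm

end Relations

section Models

variable {G : SimpleGraph V} {ψ ψ' : V → Circle1 × Circle1} {u v w : V}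

lemma endpoints_ne (hd : DistinctEndpointsOn Set.univ ψ) (hne : v ≠ u) :
    (ψ v).1 ≠ (ψ v).2 ∧ (ψ u).1 ≠ (ψ u).2 ∧ (ψ u).1 ≠ (ψ v).1 ∧ (ψ u).1 ≠ (ψ v).2 ∧
      (ψ u).2 ≠ (ψ v).1 ∧ (ψ u).2 ≠ (ψ v).2 := by
  have h : ∀ p q : V × Bool, p ≠ q → lep ψ p ≠ lep ψ q :=
    fun p q hpq => hd.ne (Set.mem_univ _) (Set.mem_univ _) hpq
  exact ⟨h (v, false) (v, true) (by simp), h (u, false) (u, true) (by simp),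
    h (u, false) (v, false) (by simp [hne.symm]), h (u, false) (v, true) (by simp [hne.symm]),
    h (u, true) (v, false) (by simp [hne.symm]), h (u, true) (v, true) (by simp [hne.symm])⟩

lemma IsCAModel.mem_cnbr_iff (hm : IsCAModel G ψ) :
    w ∈ cnbr G u ↔ (arcPts (ψ u) ∩ arcPts (ψ w)).Nonempty := by
  rcases eq_or_ne w u with rfl | hwu
  · exact iff_of_true (self_mem_cnbr w) ⟨(ψ w).1, left_mem_arcSet _ _, left_mem_arcSet _ _⟩
  · rw [mem_cnbr, or_iff_right hwu, hm.2 u w hwu.symm]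

lemma IsCAModel.cnbr_subset (hm : IsCAModel G ψ) (h : arcPts (ψ u) ⊆ arcPts (ψ v)) :
    cnbr G u ⊆ cnbr G v := fun w hw => by
  obtain ⟨x, hxu, hxw⟩ := hm.mem_cnbr_iff.mp hw
  exact hm.mem_cnbr_iff.mpr ⟨x, h hxu, hxw⟩

lemma IsCAModel.cnbr_ssubset_of_union_eq_univ (htw : NoTwins G) (hm : IsCAModel G ψ) {x y : V}
    (hcov : arcPts (ψ x) ∪ arcPts (ψ y) = Set.univ) (hxy : x ∈ cnbr G y)
    (hw : w ∈ cnbr G x \ cnbr G y) : cnbr G w ⊂ cnbr G x := by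
  have hwx : w ≠ x := by rintro rfl; exact hw.2 hxy
  -- the arc of `w` misses the arc of `y`, hence lies in the arc of `x`
  refine ssubset_of_subset_of_ne (hm.cnbr_subset fun t ht => ?_) (htw w x hwx)
  refine (Set.eq_univ_iff_forall.mp hcov t).resolve_right fun hty => hw.2 ?_
  exact hm.mem_cnbr_iff.mpr ⟨t, hty, ht⟩

lemma IsCAModel.cc_of_union_eq_univ (htw : NoTwins G) (hm : IsCAModel G ψ) (hne : v ≠ u)
    (hcov : arcPts (ψ v) ∪ arcPts (ψ u) = Set.univ) : Cc G v u := by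
  obtain ⟨hab, hpq, -⟩ := endpoints_ne hm.1 hne
  have hadj : u ∈ cnbr G v :=
    hm.mem_cnbr_iff.mpr ⟨(ψ u).1, (mem_of_arcSet_union_eq_univ hab hpq hcov).1, left_mem_arcSet _ _⟩
  have huniv : cnbr G v ∪ cnbr G u = Set.univ := by
    refine Set.eq_univ_of_forall fun w => ?_
    rcases Set.eq_univ_iff_forall.mp hcov (ψ w).1 with h | h
    · exact Or.inl (hm.mem_cnbr_iff.mpr ⟨_, h, left_mem_arcSet _ _⟩)
    · exact Or.inr (hm.mem_cnbr_iff.mpr ⟨_, h, left_mem_arcSet _ _⟩)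
  exact ⟨hne, (mem_cnbr.mp hadj).resolve_left hne.symm, huniv,
    fun w hw => hm.cnbr_ssubset_of_union_eq_univ htw hcov (mem_cnbr_comm.mp hadj) hw,
    fun w hw => hm.cnbr_ssubset_of_union_eq_univ htw (Set.union_comm _ _ ▸ hcov) hadj hw⟩

lemma IsCAModel.of_subset (hm : IsCAModel G ψ) (hd : DistinctEndpointsOn Set.univ ψ')
    (hsub : ∀ w, arcPts (ψ w) ⊆ arcPts (ψ' w))
    (hnew : ∀ u v x, u ≠ v → x ∈ arcPts (ψ' u) → x ∉ arcPts (ψ u) → x ∈ arcPts (ψ' v) →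
      G.Adj u v) :
    IsCAModel G ψ' := by
  refine ⟨hd, fun u v huv => ⟨fun h => ?_, fun ⟨x, hxu, hxv⟩ => ?_⟩⟩
  · obtain ⟨x, hxu, hxv⟩ := (hm.2 u v huv).mp h
    exact ⟨x, hsub u hxu, hsub v hxv⟩
  by_cases hu : x ∈ arcPts (ψ u)
  · by_cases hv : x ∈ arcPts (ψ v)
    · exact (hm.2 u v huv).mpr ⟨x, hu, hv⟩
    · exact (hnew v u x huv.symm hxv hv hxu).symm
  · exact hnew u v x huv hxu hu hxv

lemma IsCAModel.mem_cnbr_of_dominated (hm : IsCAModel G ψ) {u' v' : V}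
    (hu : cnbr G u' ⊆ cnbr G u) (hv : cnbr G v' ⊆ cnbr G v)
    (h : (arcPts (ψ u') ∩ arcPts (ψ v')).Nonempty) : v ∈ cnbr G u :=
  mem_cnbr_comm.mp (hv (mem_cnbr_comm.mp (hu (hm.mem_cnbr_iff.mpr h))))

lemma IsCAModel.exists_arcSet_eq_dominated [Fintype V] (hun : NoUniversal G)
    (hm : IsCAModel G ψ) (v : V) :
    ∃ A ∈ Set.range (lep ψ), ∃ B ∈ Set.range (lep ψ), A ≠ B ∧
      ∀ x, x ∈ arcSet A B ↔ ∃ u, cnbr G u ⊆ cnbr G v ∧ x ∈ arcPts (ψ u) := by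
  classical
  obtain ⟨z, hz⟩ : ∃ z, ∀ u, cnbr G u ⊆ cnbr G v → z ∉ arcPts (ψ u) := by
    by_contra! h
    refine hun v (Set.eq_univ_of_forall fun w => ?_)
    obtain ⟨u, hu, hwu⟩ := h (ψ w).1
    exact hu (hm.mem_cnbr_iff.mpr ⟨_, hwu, left_mem_arcSet _ _⟩)
  let S := Finset.univ.filter fun u => cnbr G u ⊆ cnbr G v
  have hS : ∀ u, u ∈ S ↔ cnbr G u ⊆ cnbr G v := by simp [S]
  obtain ⟨i, -, j, -, hij⟩ := exists_arcSet_eq_biUnion S ψ ((hS v).mpr subset_rfl)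
    (fun u hu => Set.inter_comm _ _ ▸ hm.mem_cnbr_iff.mp ((hS u).mp hu (self_mem_cnbr u)))
    (fun u hu => hz u ((hS u).mp hu))
  refine ⟨_, ⟨(i, false), rfl⟩, _, ⟨(j, true), rfl⟩, fun h => ?_, fun x => ?_⟩
  · have hzU : z ∈ ⋃ k ∈ S, arcPts (ψ k) := by
      rw [← hij]; simp only [lep_false, lep_true] at h; rw [h, arcSet_self]; trivial
    obtain ⟨k, hk, hzk⟩ := Set.mem_iUnion₂.mp hzU
    exact hz k ((hS k).mp hk) hzk
  · simp [hij, hS]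

lemma DistinctEndpointsOn.of_fresh (hd : DistinctEndpointsOn Set.univ ψ) (P : Set (V × Bool))
    (hsame : ∀ p ∉ P, lep ψ' p = lep ψ p) (hfresh : ∀ p ∈ P, lep ψ' p ∉ Set.range (lep ψ))
    (hinj : Set.InjOn (lep ψ') P) : DistinctEndpointsOn Set.univ ψ' := by
  intro p _ q _ h
  by_cases hp : p ∈ P <;> by_cases hq : q ∈ P
  · exact hinj hp hq h
  · exact absurd ⟨q, (hsame q hq).symm.trans h.symm⟩ (hfresh p hp)
  · exact absurd ⟨p, (hsame p hp).symm.trans h⟩ (hfresh q hq)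
  · exact hd trivial trivial ((hsame p hp).symm.trans (h.trans (hsame q hq)))

lemma DistinctEndpointsOn.update_fresh [DecidableEq V] (hd : DistinctEndpointsOn Set.univ ψ)
    (hne : v ≠ u) {a b : Circle1} (hab : a ≠ b) (ha : a ∉ Set.range (lep ψ))
    (hb : b ∉ Set.range (lep ψ)) :
    DistinctEndpointsOn Set.univ
      (Function.update (Function.update ψ v (a, (ψ v).2)) u ((ψ u).1, b)) := by
  refine hd.of_fresh {(v, false), (u, true)} (fun ⟨w, c⟩ hp => ?_) ?_ ?_
  · by_cases hwv : w = v
    · subst hwv; cases c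
      exacts [absurd (by simp) hp, by simp [hne]]
    by_cases hwu : w = u
    · subst hwu; cases c
      exacts [by simp, absurd (by simp) hp]
    cases c <;> simp [hwv, hwu]
  · rintro p (rfl | rfl)
    exacts [by simpa [hne] using ha, by simpa using hb]
  · simpa [hne] using hab

end Models

section Normalized

variable {G : SimpleGraph V} {ψ : V → Circle1 × Circle1} {u v : V}

def NbhdMonotone (G : SimpleGraph V) (ψ : V → Circle1 × Circle1) : Prop :=
  ∀ u v, cnbr G u ⊆ cnbr G v → arcPts (ψ u) ⊆ arcPts (ψ v)

def CcCovering (G : SimpleGraph V) (ψ : V → Circle1 × Circle1) : Prop :=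
  ∀ u v, Cc G v u → arcPts (ψ v) ∪ arcPts (ψ u) = Set.univ

lemma IsCAModel.cs_iff (hm : IsCAModel G ψ) (hmono : NbhdMonotone G ψ) (hne : v ≠ u) :
    Cs G v u ↔ arcPts (ψ u) ⊂ arcPts (ψ v) :=
  ⟨fun h => ⟨hmono u v h.2.1, fun h' => h.2.2 (hm.cnbr_subset h')⟩,
    fun h => ⟨hne, hm.cnbr_subset h.1, fun h' => h.2 (hmono v u h')⟩⟩

lemma IsCAModel.isNormalizedModel (htw : NoTwins G) (hm : IsCAModel G ψ)
    (hmono : NbhdMonotone G ψ) (hcov : CcCovering G ψ) : IsNormalizedModel G ψ := by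
  refine ⟨hm, fun u v hne => ?_⟩
  have hdi : Di G v u ↔ arcPts (ψ v) ∩ arcPts (ψ u) = ∅ := by
    rw [← Set.not_nonempty_iff_eq_empty, ← hm.2 v u hne.symm, Di, and_iff_right hne.symm]
  have hcs := hm.cs_iff hmono hne.symm
  have hcd : Cd G v u ↔ arcPts (ψ v) ⊂ arcPts (ψ u) := cd_iff_cs.trans (hm.cs_iff hmono hne)
  have hcc : Cc G v u ↔ arcPts (ψ v) ∪ arcPts (ψ u) = Set.univ :=
    ⟨hcov u v, hm.cc_of_union_eq_univ htw hne.symm⟩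
  have hantisymm : arcPts (ψ v) ⊆ arcPts (ψ u) → arcPts (ψ u) ⊆ arcPts (ψ v) → False :=
    fun h h' => htw u v hne (subset_antisymm (hm.cnbr_subset h') (hm.cnbr_subset h))
  refine ⟨hdi, hcs, hcd, hcc, ?_⟩
  rw [Ov, hdi, hcs, hcd, hcc, ArcsOverlap, Set.nonempty_iff_ne_empty, Set.ssubset_def,
    Set.ssubset_def]
  tauto

lemma iffs_of_cases {L R X P Q : Prop} (h : L ∨ R ∨ X) (hL : L → P ∧ Q) (hR : R → ¬P ∧ ¬Q)
    (hX : X → (P ∧ ¬Q) ∨ (Q ∧ ¬P)) :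
    (L ↔ P ∧ Q) ∧ (R ↔ ¬P ∧ ¬Q) ∧ (X ↔ (P ∧ ¬Q) ∨ (Q ∧ ¬P)) := by
  tauto

lemma IsNormalizedModel.side_iff (h : IsNormalizedModel G ψ) (hne : u ≠ v) :
    (u ∈ leftSet G v ↔ OnLeft (ψ v) (ψ u)) ∧ (u ∈ rightSet G v ↔ OnRight (ψ v) (ψ u)) ∧
      (Ov G v u ↔ Crosses (ψ v) (ψ u)) := by
  obtain ⟨hab, hpq, hpa, hpb, hqa, hqb⟩ := endpoints_ne h.1.1 hne.symm
  obtain ⟨hdi, hcs, hcd, hcc, hov⟩ := h.2 u v hne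
  rw [onLeft_iff hab hpa hpb hqa hqb, onRight_iff, crosses_iff hab hpa hpb hqa hqb]
  have hL : u ∈ leftSet G v → (ψ u).1 ∈ arcPts (ψ v) ∧ (ψ u).2 ∈ arcPts (ψ v) := by
    rintro (h' | h')
    · exact ⟨(hcs.mp h').1 (left_mem_arcSet _ _), (hcs.mp h').1 (right_mem_arcSet _ _)⟩
    · exact mem_of_arcSet_union_eq_univ hab hpq (hcc.mp h')
  have hR : u ∈ rightSet G v → (ψ u).1 ∉ arcPts (ψ v) ∧ (ψ u).2 ∉ arcPts (ψ v) := by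
    rintro (h' | h')
    · have hdisj := hdi.mp h'
      exact ⟨fun hp => hdisj.subset ⟨hp, left_mem_arcSet _ _⟩,
        fun hq => hdisj.subset ⟨hq, right_mem_arcSet _ _⟩⟩
    · exact notMem_of_arcSet_subset hab hpq hpa hqa hqb (hcd.mp h').1
  have hX : Ov G v u → ((ψ u).1 ∈ arcPts (ψ v) ∧ (ψ u).2 ∉ arcPts (ψ v)) ∨
      ((ψ u).2 ∈ arcPts (ψ v) ∧ (ψ u).1 ∉ arcPts (ψ v)) :=
    fun h' => mem_xor_of_arcsOverlap hab hpq (hov.mp h')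
  have hcases : u ∈ leftSet G v ∨ u ∈ rightSet G v ∨ Ov G v u := by
    rcases di_or_cs_or_cd_or_cc_or_ov hne.symm with h' | h' | h' | h' | h'
    exacts [Or.inr (Or.inl (Or.inl h')), Or.inl (Or.inl h'), Or.inr (Or.inl (Or.inr h')),
      Or.inl (Or.inr h'), Or.inr (Or.inr h')]
  exact iffs_of_cases hcases hL hR hX

lemma IsNormalizedModel.isConformalOn (h : IsNormalizedModel G ψ) :
    IsConformalOn G Set.univ ψ :=
  ⟨⟨h.1.1, fun _ _ _ _ hne => (h.side_iff hne.symm).2.2⟩,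
    fun _ _ _ _ hne => ⟨(h.side_iff hne).1, (h.side_iff hne).2.1⟩⟩

lemma IsConformalOn.isCAModel (hc : IsConformalOn G Set.univ ψ) : IsCAModel G ψ := by
  obtain ⟨⟨hd, hcross⟩, hside⟩ := hc
  have hleft : ∀ {v u}, u ≠ v → u ∈ leftSet G v → (arcPts (ψ u) ∩ arcPts (ψ v)).Nonempty :=
    fun {v u} hne h => ⟨(ψ u).1, left_mem_arcSet _ _,
      btw_of_sbtw ((hside v (Set.mem_univ v) u (Set.mem_univ u) hne).1.mp h).1⟩
  refine ⟨hd, fun u v hne => ⟨fun hadj => ?_, fun hmeet => ?_⟩⟩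
  · rcases di_or_cs_or_cd_or_cc_or_ov hne with h | h | h | h | h
    · exact absurd hadj h.2
    · exact Set.inter_comm _ _ ▸ hleft hne.symm (Or.inl h)
    · exact hleft hne (Or.inl (cd_iff_cs.mp h))
    · exact Set.inter_comm _ _ ▸ hleft hne.symm (Or.inr h)
    · rcases (hcross u (Set.mem_univ u) v (Set.mem_univ v) hne).mp h with ⟨h', -⟩ | ⟨h', -⟩
      exacts [⟨_, btw_of_sbtw h', left_mem_arcSet _ _⟩, ⟨_, btw_of_sbtw h', right_mem_arcSet _ _⟩]
  · by_contra hadj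
    have hr : ∀ {v u}, u ≠ v → ¬ G.Adj v u → OnRight (ψ v) (ψ u) := fun {v u} hne h =>
      (hside v (Set.mem_univ v) u (Set.mem_univ u) hne).2.1 (Or.inl ⟨hne.symm, h⟩)
    obtain ⟨hab, hpq, -⟩ := endpoints_ne hd hne
    have h₁ := onRight_iff.mp (hr hne.symm hadj)
    have h₂ := onRight_iff.mp (hr hne (fun h => hadj h.symm))
    exact Set.nonempty_iff_ne_empty.mp hmeet (arcSet_inter_eq_empty hab hpq h₁.1 h₁.2 h₂.1)

end Normalized

section Normalization

variable {G : SimpleGraph V} {ψ ψ' : V → Circle1 × Circle1} {u v w : V}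

/-- The arc of `v` becomes the arc swept out by the arcs of the vertices dominated by `v`, widened
by `δ v` at both ends; `δ` increases strictly with `N[v]`, so that dominated arcs sharing an
endpoint end up strictly nested, and is injective, so that endpoints stay distinct. -/
theorem IsCAModel.exists_nbhdMonotone [Fintype V] (htw : NoTwins G) (hun : NoUniversal G)
    (hm : IsCAModel G ψ) :
    ∃ ψ', IsCAModel G ψ' ∧ (∀ w, arcPts (ψ w) ⊆ arcPts (ψ' w)) ∧ NbhdMonotone G ψ' := by
  obtain ⟨m, hm0, hm1, hE⟩ := exists_separated (Set.finite_range (lep ψ))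
  obtain ⟨δ, hδ, hδinj, hδlt⟩ := exists_pos_lt_injective_of_lt (cnbr G) (half_pos hm0)
  choose A hA B hB hAB hU using hm.exists_arcSet_eq_dominated hun
  let ψ' : V → Circle1 × Circle1 := fun v => (A v - (δ v : Circle1), B v + (δ v : Circle1))
  have h2δ : ∀ v, 2 * δ v < arcLen (B v) (A v) :=
    fun v => by linarith [hE _ (hB v) _ (hA v) (hAB v).symm, (hδ v).2]
  have hwiden : ∀ v, arcSet (A v) (B v) ⊆ arcPts (ψ' v) :=
    fun v x hx => (mem_arcSet_widen (hδ v).1.le (h2δ v)).mpr (Or.inl hx)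
  have hgrow : ∀ w, arcPts (ψ w) ⊆ arcPts (ψ' w) :=
    fun w x hx => hwiden w ((hU w x).mpr ⟨w, subset_rfl, hx⟩)
  have hdist : DistinctEndpointsOn Set.univ ψ' :=
    hE.distinctEndpointsOn_widen hm1 hA hB hδ hδinj
  refine ⟨ψ', hm.of_subset hdist hgrow fun u v x huv hxu _ hxv => ?_, hgrow, fun u v huv => ?_⟩
  · obtain ⟨y, hyu, hyv⟩ := hE.inter_nonempty_of_widen hm1 (hA u) (hB u) (hA v) (hB v) (hAB u)
      (hAB v) (hδ u).1.le (hδ u).2 (hδ v).1.le (hδ v).2 hxu hxv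
    obtain ⟨u', hu', hyu'⟩ := (hU u y).mp hyu
    obtain ⟨v', hv', hyv'⟩ := (hU v y).mp hyv
    exact (mem_cnbr.mp (hm.mem_cnbr_of_dominated hu' hv' ⟨y, hyu', hyv'⟩)).resolve_left
      huv.symm
  · rcases eq_or_ne u v with rfl | hne
    · exact subset_rfl
    have hlt := hδlt u v (ssubset_of_subset_of_ne huv (htw u v hne))
    refine hE.widen_subset (hA u) (hB u) (hA v) (hB v) (hAB u) (hAB v) (fun x hx => ?_)
      (hδ u).1.le hlt.le (hδ v).2
    obtain ⟨w, hw, hxw⟩ := (hU u x).mp hx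
    exact (hU v x).mpr ⟨w, hw.trans huv, hxw⟩

lemma NbhdMonotone.adj_of_notMem (hmono : NbhdMonotone G ψ) (hcc : Cc G v u) (hwv : w ≠ v)
    (hwu : w ≠ u) {x : Circle1} (hx : x ∈ arcPts (ψ w)) (hxv : x ∉ arcPts (ψ v))
    (hxu : x ∉ arcPts (ψ u)) : G.Adj v w ∧ G.Adj u w := by
  obtain ⟨-, -, huniv, hv, hu⟩ := hcc
  have hwv' : w ∈ cnbr G v := by
    by_contra h
    have hw : w ∈ cnbr G u := (Set.eq_univ_iff_forall.mp huniv w).resolve_left h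
    exact hxu (hmono w u (hu w ⟨hw, h⟩).1 hx)
  have hwu' : w ∈ cnbr G u := by
    by_contra h
    exact hxv (hmono w v (hv w ⟨hwv', h⟩).1 hx)
  exact ⟨(mem_cnbr.mp hwv').resolve_left hwv, (mem_cnbr.mp hwu').resolve_left hwu⟩

lemma Cc.arcLen_fst_le_and_snd_lt (hun : NoUniversal G) (hm : IsCAModel G ψ) (hcc : Cc G v u)
    {z : Circle1} (hzv : z ∉ arcPts (ψ v)) (hzu : z ∉ arcPts (ψ u))
    (hord : arcLen z (ψ v).1 ≤ arcLen z (ψ u).1) :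
    arcLen z (ψ u).1 ≤ arcLen z (ψ v).2 ∧ arcLen z (ψ v).2 < arcLen z (ψ u).2 := by
  obtain ⟨hne, hadj, huniv, -⟩ := hcc
  have hv := (mem_arcSet_iff_of_notMem hzv).2
  have hu := (mem_arcSet_iff_of_notMem hzu).2
  obtain ⟨y, hyv, hyu⟩ := (hm.2 v u hne).mp hadj
  rw [arcPts_eq, hv] at hyv
  rw [arcPts_eq, hu] at hyu
  refine ⟨by linarith [hyu.1, hyv.2], not_le.mp fun h => hun v ?_⟩
  have hsub : cnbr G u ⊆ cnbr G v := hm.cnbr_subset fun x hx => by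
    rw [arcPts_eq, hu] at hx
    rw [arcPts_eq, hv]
    exact ⟨by linarith [hx.1], hx.2.trans h⟩
  rwa [Set.union_eq_left.mpr hsub] at huniv

lemma Cc.isCAModel_of_grow (hcc : Cc G v u) (hm : IsCAModel G ψ) (hmono : NbhdMonotone G ψ)
    (hd : DistinctEndpointsOn Set.univ ψ') (hsub : ∀ w, arcPts (ψ w) ⊆ arcPts (ψ' w))
    (hsame : ∀ w, w ≠ v → w ≠ u → ψ' w = ψ w)
    (hout : ∀ w x, x ∈ arcPts (ψ' w) → x ∉ arcPts (ψ w) → x ∉ arcPts (ψ v) ∧ x ∉ arcPts (ψ u)) :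
    IsCAModel G ψ' := by
  refine hm.of_subset hd hsub fun w w' x hww' hx hxw hxw' => ?_
  have hw : w = v ∨ w = u := by
    by_contra! h
    exact hxw (hsame w h.1 h.2 ▸ hx)
  obtain ⟨hxv, hxu⟩ := hout w x hx hxw
  by_cases hw'v : w' = v
  · rcases hw with rfl | rfl
    exacts [absurd hw'v hww'.symm, hw'v ▸ hcc.2.1.symm]
  by_cases hw'u : w' = u
  · rcases hw with rfl | rfl
    exacts [hw'u ▸ hcc.2.1, absurd hw'u hww'.symm]
  have hadj := hmono.adj_of_notMem hcc hw'v hw'u (hsame w' hw'v hw'u ▸ hxw') hxv hxu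
  rcases hw with rfl | rfl
  exacts [hadj.1, hadj.2]

/-- Extend the arc of `v` backwards and that of `u` forwards, into the gap between them, until
they cover the circle; every arc met on the way belongs to a common neighbour of `v` and `u`. -/
theorem Cc.exists_union_eq_univ [Finite V] (hun : NoUniversal G) (hm : IsCAModel G ψ)
    (hmono : NbhdMonotone G ψ) (hcc : Cc G v u) :
    ∃ ψ', IsCAModel G ψ' ∧ (∀ w, arcPts (ψ w) ⊆ arcPts (ψ' w)) ∧
      arcPts (ψ' v) ∪ arcPts (ψ' u) = Set.univ := by
  classical
  by_cases hcov : arcPts (ψ v) ∪ arcPts (ψ u) = Set.univ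
  · exact ⟨ψ, hm, fun _ => subset_rfl, hcov⟩
  obtain ⟨z, hz⟩ := (Set.ne_univ_iff_exists_notMem _).mp hcov
  rw [Set.mem_union, not_or] at hz
  wlog hord : arcLen z (ψ v).1 ≤ arcLen z (ψ u).1 generalizing v u
  · obtain ⟨ψ', h₁, h₂, h₃⟩ := this hcc.symm (by rwa [Set.union_comm]) hz.symm (by linarith)
    exact ⟨ψ', h₁, h₂, by rwa [Set.union_comm]⟩
  obtain ⟨hs'e, hee'⟩ := hcc.arcLen_fst_le_and_snd_lt hun hm hz.1 hz.2 hord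
  have hfin := Set.finite_range (lep ψ)
  obtain ⟨γ₁, hγ₁, hγ₁1, hγ₁E⟩ :=
    exists_add_coe_notMem hfin z (arcLen_nonneg z _) (arcLen_lt_one z (ψ u).2) le_rfl
  obtain ⟨γ₂, hγ₂, hγ₂1, hγ₂E⟩ :=
    exists_add_coe_notMem hfin z (by linarith [arcLen_nonneg z (ψ u).2]) hγ₁1 le_rfl
  obtain ⟨hgv, hgu, hcover, houtv, houtu⟩ :=
    arcSet_extend hz.1 hz.2 hord hs'e hee' hγ₁ hγ₂ hγ₂1
  have hγ : z + (γ₁ : Circle1) ≠ z + (γ₂ : Circle1) := fun h => by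
    have := arcLen_add_coe z (t := γ₂) (by linarith [arcLen_nonneg z (ψ u).2]) hγ₂1
    rw [← h, arcLen_add_coe z (by linarith [arcLen_nonneg z (ψ u).2]) hγ₁1] at this
    linarith
  let ψ' := Function.update (Function.update ψ v (z + (γ₁ : Circle1), (ψ v).2)) u
    ((ψ u).1, z + (γ₂ : Circle1))
  have hne := hcc.1
  have hψv : ψ' v = (z + (γ₁ : Circle1), (ψ v).2) := by simp [ψ', hne]
  have hψu : ψ' u = ((ψ u).1, z + (γ₂ : Circle1)) := by simp [ψ']
  have hψw : ∀ w, w ≠ v → w ≠ u → ψ' w = ψ w := fun w hwv hwu => by simp [ψ', hwv, hwu]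
  have hgrow : ∀ w, arcPts (ψ w) ⊆ arcPts (ψ' w) := fun w => by
    by_cases hwv : w = v
    · subst hwv; rw [hψv]; exact hgv
    by_cases hwu : w = u
    · subst hwu; rw [hψu]; exact hgu
    rw [hψw w hwv hwu]
  refine ⟨ψ', hcc.isCAModel_of_grow hm hmono (hm.1.update_fresh hne hγ hγ₁E hγ₂E) hgrow hψw
    fun w x hx hxw => ?_, hgrow, by rwa [hψv, hψu]⟩
  by_cases hwv : w = v
  · subst hwv; rw [hψv] at hx; exact ⟨hxw, houtv x hx hxw⟩
  by_cases hwu : w = u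
  · subst hwu; rw [hψu] at hx; exact ⟨houtu x hx hxw, hxw⟩
  exact absurd (hψw w hwv hwu ▸ hx) hxw

def uncoveredCc (G : SimpleGraph V) (ψ : V → Circle1 × Circle1) : Set (V × V) :=
  {p | Cc G p.1 p.2 ∧ arcPts (ψ p.1) ∪ arcPts (ψ p.2) ≠ Set.univ}

lemma uncoveredCc_anti (hsub : ∀ w, arcPts (ψ w) ⊆ arcPts (ψ' w)) :
    uncoveredCc G ψ' ⊆ uncoveredCc G ψ := fun _ ⟨hcc, hne⟩ =>
  ⟨hcc, fun h => hne (Set.eq_univ_of_univ_subset (h ▸ Set.union_subset_union (hsub _) (hsub _)))⟩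

theorem IsCAModel.exists_isNormalizedModel [Fintype V] (htw : NoTwins G) (hun : NoUniversal G)
    (hm : IsCAModel G ψ) : ∃ ψ', IsNormalizedModel G ψ' := by
  obtain ⟨ψ, hm, -, hmono⟩ := hm.exists_nbhdMonotone htw hun
  induction h : (uncoveredCc G ψ).ncard using Nat.strong_induction_on generalizing ψ with
  | _ n ih =>
  by_cases hcov : CcCovering G ψ
  · exact ⟨ψ, hm.isNormalizedModel htw hmono hcov⟩
  obtain ⟨u, v, hcc, hnc⟩ : ∃ u v, Cc G v u ∧ arcPts (ψ v) ∪ arcPts (ψ u) ≠ Set.univ := by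
    simpa [CcCovering] using hcov
  obtain ⟨ψ₁, hm₁, hsub₁, hcov₁⟩ := hcc.exists_union_eq_univ hun hm hmono
  obtain ⟨ψ₂, hm₂, hsub₂, hmono₂⟩ := hm₁.exists_nbhdMonotone htw hun
  refine ih _ (h ▸ Set.ncard_lt_ncard ?_ (Set.toFinite _)) ψ₂ hm₂ hmono₂ rfl
  refine Set.ssubset_iff_of_subset (uncoveredCc_anti fun w => (hsub₁ w).trans (hsub₂ w)) |>.mpr
    ⟨(v, u), ⟨hcc, hnc⟩, fun ⟨_, h⟩ => h ?_⟩
  exact Set.eq_univ_of_univ_subset (hcov₁ ▸ Set.union_subset_union (hsub₂ v) (hsub₂ u))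

end Normalization

/-- A finite graph `G` with no twins and no universal vertices is a
circular-arc graph if and only if its overlap graph admits a conformal oriented
chord model. -/
theorem stmt2 {V : Type*} [Fintype V] (G : SimpleGraph V)
    (htw : NoTwins G) (hun : NoUniversal G) :
    IsCircularArc G ↔ ∃ φ : V → Circle1 × Circle1, IsConformalOn G Set.univ φ := by
  constructor
  · rintro ⟨ψ, hψ⟩
    obtain ⟨ψ', hψ'⟩ := hψ.exists_isNormalizedModel htw hun
    exact ⟨ψ', hψ'.isConformalOn⟩
  · rintro ⟨φ, hφ⟩
    exact ⟨φ, hφ.isCAModel⟩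

end CAIso
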